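/- arXiv:1006.5740 — 8 statements merged into one kernel-verified Lean document; each statement's English description precedes it below -/
import Mathlib

section
/- Let K ⊆ ℝ² be compact. Then there exists n₀ ∈ ℕ such that for every n ≥ n₀ there is a finite set 𝒥 ⊆ ℤ² with the following properties: setting K_n = ⋃_{(j₁,j₂) ∈ 𝒥} [j₁/n, (j₁+1)/n] × [j₂/n, (j₂+1)/n], one has K ⊆ K_n and (K − K) ∩ ℤ² = (K_n − K_n) ∩ ℤ². -/
/-!
Let `K_n` be the union of the grid squares of side `1/n` that meet `K`. Every point of `K_n` lies
within `1/n` of `K`, so `K_n - K_n` lies in the `2/n`-thickening of the compact set `K - K`.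
Lattice points not in `K - K` form a closed set (any set of lattice points is closed), so some
`δ`-thickening of `K - K` contains no new lattice point; taking `2/n < δ` gives the equality.
-/

open Pointwise

/-- The closed grid square `[j₁/n, (j₁+1)/n] × [j₂/n, (j₂+1)/n]`. -/
def gridSquare (n : ℕ) (J : ℤ × ℤ) : Set (ℝ × ℝ) :=
  Set.Icc ((J.1 : ℝ) / n) ((J.1 + 1 : ℝ) / n) ×ˢ
    Set.Icc ((J.2 : ℝ) / n) ((J.2 + 1 : ℝ) / n)

/-- The set of integer points of the plane. -/
def intLattice : Set (ℝ × ℝ) := {x | ∃ a b : ℤ, x = ((a : ℝ), (b : ℝ))}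

open Metric Bornology

lemma dist_le_of_mem_gridSquare {n : ℕ} {J : ℤ × ℤ} {x y : ℝ × ℝ}
    (hx : x ∈ gridSquare n J) (hy : y ∈ gridSquare n J) : dist x y ≤ 1 / n := by
  have side : ∀ j : ℤ, ((j : ℝ) + 1) / n - (j : ℝ) / n = 1 / n := fun j => by ring
  rw [Prod.dist_eq, max_le_iff]
  exact ⟨(Real.dist_le_of_mem_Icc hx.1 hy.1).trans_eq (side _),
    (Real.dist_le_of_mem_Icc hx.2 hy.2).trans_eq (side _)⟩

lemma corner_mem_gridSquare (n : ℕ) (J : ℤ × ℤ) :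
    ((J.1 : ℝ) / n, (J.2 : ℝ) / n) ∈ gridSquare n J :=
  have step : ∀ j : ℤ, (j : ℝ) / n ≤ (j + 1 : ℝ) / n := fun j =>
    div_le_div_of_nonneg_right (by linarith) n.cast_nonneg
  ⟨⟨le_rfl, step J.1⟩, ⟨le_rfl, step J.2⟩⟩

lemma mem_gridSquare_floor {n : ℕ} (hn : 0 < n) (x : ℝ × ℝ) :
    x ∈ gridSquare n (⌊n * x.1⌋, ⌊n * x.2⌋) := by
  have hn' : (0 : ℝ) < n := by exact_mod_cast hn
  have floor_mem : ∀ t : ℝ, t ∈ Set.Icc ((⌊n * t⌋ : ℝ) / n) ((⌊n * t⌋ + 1 : ℝ) / n) := fun t =>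
    ⟨by rw [div_le_iff₀ hn', mul_comm]; exact Int.floor_le _,
     by rw [le_div_iff₀ hn', mul_comm]; exact (Int.lt_floor_add_one _).le⟩
  exact ⟨floor_mem x.1, floor_mem x.2⟩

def gridIndices (n : ℕ) (K : Set (ℝ × ℝ)) : Set (ℤ × ℤ) := {J | (gridSquare n J ∩ K).Nonempty}

def gridCover (n : ℕ) (K : Set (ℝ × ℝ)) : Set (ℝ × ℝ) := ⋃ J ∈ gridIndices n K, gridSquare n J

variable {n : ℕ} {K : Set (ℝ × ℝ)}

lemma subset_gridCover (hn : 0 < n) : K ⊆ gridCover n K := fun x hx =>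
  Set.mem_biUnion ⟨x, mem_gridSquare_floor hn x, hx⟩ (mem_gridSquare_floor hn x)

lemma exists_dist_le_of_mem_gridCover {x : ℝ × ℝ} (hx : x ∈ gridCover n K) :
    ∃ y ∈ K, dist x y ≤ 1 / n := by
  obtain ⟨J, ⟨y, hyJ, hyK⟩, hxJ⟩ := Set.mem_iUnion₂.1 hx
  exact ⟨y, hyK, dist_le_of_mem_gridSquare hxJ hyJ⟩

lemma finite_gridIndices (hK : IsBounded K) (hn : 0 < n) : (gridIndices n K).Finite := by
  set ι : ℤ × ℤ → ℝ × ℝ := Prod.map (↑) (↑)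
  have hι : Isometry ι := Real.isometry_intCast.prodMap Real.isometry_intCast
  have hn' : (n : ℝ) ≠ 0 := by exact_mod_cast hn.ne'
  have hsub : gridIndices n K ⊆ ι ⁻¹' ((n : ℝ) • cthickening (1 / n) K) := by
    intro J hJ
    obtain ⟨y, hyK, hy⟩ :=
      exists_dist_le_of_mem_gridCover (Set.mem_biUnion hJ (corner_mem_gridSquare n J))
    refine ⟨_, mem_cthickening_of_dist_le _ y _ _ hyK hy, ?_⟩
    show (n : ℝ) • ((J.1 : ℝ) / n, (J.2 : ℝ) / n) = ((J.1 : ℝ), (J.2 : ℝ))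
    simp only [Prod.smul_mk, smul_eq_mul, mul_div_cancel₀ _ hn']
  have hbdd : IsBounded (ι ⁻¹' ((n : ℝ) • cthickening (1 / n) K)) :=
    hι.antilipschitz.isBounded_preimage (hK.cthickening.smul₀ _)
  exact (finite_isBounded_inter_isClosed DiscreteTopology.isDiscrete hbdd isClosed_univ).subset
    fun J hJ => ⟨hsub hJ, trivial⟩

lemma gridCover_sub_gridCover_subset_thickening {δ : ℝ} (h : 2 / n < δ) :
    gridCover n K - gridCover n K ⊆ thickening δ (K - K) := by
  rintro _ ⟨x, hx, y, hy, rfl⟩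
  obtain ⟨x₀, hx₀, hxx₀⟩ := exists_dist_le_of_mem_gridCover hx
  obtain ⟨y₀, hy₀, hyy₀⟩ := exists_dist_le_of_mem_gridCover hy
  refine mem_thickening_iff.2 ⟨x₀ - y₀, Set.sub_mem_sub hx₀ hy₀, ?_⟩
  calc dist (x - y) (x₀ - y₀) ≤ dist x x₀ + dist y y₀ := dist_sub_sub_le _ _ _ _
    _ ≤ 1 / n + 1 / n := add_le_add hxx₀ hyy₀
    _ = 2 / n := by ring
    _ < δ := h

lemma isClosed_of_subset_intLattice {S : Set (ℝ × ℝ)} (hS : S ⊆ intLattice) : IsClosed S := by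
  set ι : ℤ × ℤ → ℝ × ℝ := Prod.map (↑) (↑)
  have hrange : intLattice = Set.range ι := by
    ext x; simp [intLattice, ι, Prod.ext_iff, eq_comm]
  rw [← Set.image_preimage_eq_of_subset (hrange ▸ hS : S ⊆ Set.range ι)]
  exact (Real.isClosedEmbedding_intCast.prodMap Real.isClosedEmbedding_intCast).isClosedMap _
    (isClosed_discrete _)

lemma IsCompact.exists_thickening_inter_intLattice_subset {C : Set (ℝ × ℝ)} (hC : IsCompact C) :
    ∃ δ > 0, thickening δ C ∩ intLattice ⊆ C := by
  obtain ⟨δ, hδ, hsub⟩ := hC.exists_thickening_subset_open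
    (isClosed_of_subset_intLattice (Set.sdiff_subset (t := C))).isOpen_compl
    (fun x hx hx' => hx'.2 hx)
  exact ⟨δ, hδ, fun x ⟨hxδ, hxL⟩ => by_contra fun hxC => hsub hxδ ⟨hxL, hxC⟩⟩

theorem grid_approx (K : Set (ℝ × ℝ)) (hK : IsCompact K) :
    ∃ n₀ : ℕ, ∀ n : ℕ, n₀ ≤ n →
      ∃ 𝒥 : Finset (ℤ × ℤ),
        K ⊆ (⋃ J ∈ 𝒥, gridSquare n J) ∧
        (K - K) ∩ intLattice =
          ((⋃ J ∈ 𝒥, gridSquare n J) - (⋃ J ∈ 𝒥, gridSquare n J)) ∩ intLattice := by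
  have hKK : IsCompact (K - K) := by rw [sub_eq_add_neg]; exact hK.add hK.neg
  obtain ⟨δ, hδ, hδK⟩ := hKK.exists_thickening_inter_intLattice_subset
  obtain ⟨m, hm⟩ := exists_nat_one_div_lt (half_pos hδ)
  refine ⟨m + 1, fun n hn => ⟨(finite_gridIndices hK.isBounded (by omega : 0 < n)).toFinset, ?_⟩⟩
  simp only [Set.Finite.mem_toFinset]
  have hcover : K ⊆ gridCover n K := subset_gridCover (by omega)
  have h2n : 2 / (n : ℝ) < δ := by
    have : 1 / (n : ℝ) ≤ 1 / (m + 1) := by gcongr; exact_mod_cast hn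
    rw [show 2 / (n : ℝ) = 2 * (1 / n) by ring]
    linarith
  refine ⟨hcover, Set.Subset.antisymm ?_ ?_⟩
  · exact Set.inter_subset_inter_left _ (Set.sub_subset_sub hcover hcover)
  · exact fun x ⟨hx, hxL⟩ => ⟨hδK ⟨gridCover_sub_gridCover_subset_thickening h2n hx, hxL⟩, hxL⟩
end

section
/- There does not exist a compact set K ⊆ ℝ² such that K + ℤ² = ℝ² and (K − K) ∩ ℤ² ⊆ (ℤ × {0}) ∪ ({0} × ℤ). -/
/-!
Any two lattice representatives of a point z (lattice points g with z - g ∈ K) differ by an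
integer vector of K - K, hence by an axial one. So either all representatives of z lie in one
row or all lie in one column. The points of the first kind with row k form an open set; these
sets are pairwise disjoint, and two points of the same one differ vertically by at most diam K.
Likewise for columns. A Hex-type crossing lemma for the square [0, L]² (the discrete Hex theorem,
obtained from the Y theorem by majority coarsening, combined with a Lebesgue number) shows that
one of these open sets meets two opposite sides of the square, which is impossible for
L > diam K.
-/

open Set Metric Filter Function Pointwise

lemma Relation.ReflTransGen.exists_hits_level {α : Type*} {r : α → α → Prop} (f : α → ℤ)
    (hf : ∀ x y, r x y → f y ≤ f x + 1) {n : ℤ} {a b : α} (hab : Relation.ReflTransGen r a b)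
    (ha : f a ≤ n) (hb : n ≤ f b) :
    ∃ u, f u = n ∧ Relation.ReflTransGen (fun x y => r x y ∧ f x ≤ n ∧ f y ≤ n) a u := by
  set R := fun x y => r x y ∧ f x ≤ n ∧ f y ≤ n
  suffices ∀ b, Relation.ReflTransGen r a b →
      (∃ u, f u = n ∧ Relation.ReflTransGen R a u) ∨ (f b < n ∧ Relation.ReflTransGen R a b) from
    (this b hab).resolve_right fun h => by omega
  intro b hab
  induction hab with
  | refl => exact if h : f a = n then .inl ⟨a, h, .refl⟩ else .inr ⟨by omega, .refl⟩
  | @tail x y _ hxy ih =>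
    rcases ih with h | ⟨hx, hax⟩
    · exact .inl h
    · have := hf x y hxy
      exact if h : f y = n then .inl ⟨y, h, hax.tail ⟨hxy, hx.le, h.le⟩⟩
        else .inr ⟨by omega, hax.tail ⟨hxy, hx.le, by omega⟩⟩

namespace Hex

/-- `u` and `w` are equal or neighbours in the triangular lattice on `ℤ²`, whose neighbour
vectors are `±(1, 0)`, `±(0, 1)`, `±(1, -1)`: the cells of a Hex board. -/
def Near (u w : ℤ × ℤ) : Prop :=
  |w.1 - u.1| ≤ 1 ∧ |w.2 - u.2| ≤ 1 ∧ |w.1 - u.1 + (w.2 - u.2)| ≤ 1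

lemma near_iff {u w : ℤ × ℤ} : Near u w ↔
    -1 ≤ w.1 - u.1 ∧ w.1 - u.1 ≤ 1 ∧ -1 ≤ w.2 - u.2 ∧ w.2 - u.2 ≤ 1 ∧
      -1 ≤ w.1 - u.1 + (w.2 - u.2) ∧ w.1 - u.1 + (w.2 - u.2) ≤ 1 := by
  simp only [Near, abs_le, and_assoc]

lemma Near.refl (q : ℤ × ℤ) : Near q q := by simp [Near]

def Step (X : Set (ℤ × ℤ)) (u w : ℤ × ℤ) : Prop := u ∈ X ∧ w ∈ X ∧ Near u w

abbrev Path (X : Set (ℤ × ℤ)) : ℤ × ℤ → ℤ × ℤ → Prop := Relation.ReflTransGen (Step X)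

lemma Path.mem {X : Set (ℤ × ℤ)} {a b : ℤ × ℤ} (h : Path X a b) (ha : a ∈ X) : b ∈ X := by
  rcases h.cases_tail with rfl | ⟨_, -, hstep⟩
  exacts [ha, hstep.2.1]

def upTri (y : ℤ × ℤ) : Set (ℤ × ℤ) := {y, y + (1, 0), y + (0, 1)}

/-- The majority colour of `c` on `upTri y`. -/
def coarsen (c : ℤ × ℤ → Bool) (y : ℤ × ℤ) : Bool :=
  if c (y + (1, 0)) = c (y + (0, 1)) then c (y + (1, 0)) else c y

lemma coarsen_eq_or {c : ℤ × ℤ → Bool} {y u w : ℤ × ℤ} (hu : u ∈ upTri y) (hw : w ∈ upTri y)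
    (huw : u ≠ w) : c u = coarsen c y ∨ c w = coarsen c y := by
  simp only [upTri, mem_insert_iff, mem_singleton_iff] at hu hw
  unfold coarsen
  rcases hu with h | h | h <;> rcases hw with h' | h' | h' <;> rw [h, h'] at huw ⊢ <;>
    first
    | exact absurd rfl huw
    | cases c y <;> cases c (y + (1, 0)) <;> cases c (y + (0, 1)) <;> simp

lemma exists_mem_pair_of_coarsen (c : ℤ × ℤ → Bool) (y u w : ℤ × ℤ) (hu : u ∈ upTri y)
    (hw : w ∈ upTri y) (huw : u ≠ w) : ∃ z ∈ upTri y, (z = u ∨ z = w) ∧ c z = coarsen c y := by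
  rcases coarsen_eq_or (c := c) hu hw huw with h | h
  exacts [⟨u, hu, .inl rfl, h⟩, ⟨w, hw, .inr rfl, h⟩]

lemma near_of_mem_upTri {y u w : ℤ × ℤ} (hu : u ∈ upTri y) (hw : w ∈ upTri y) : Near u w := by
  simp only [upTri, mem_insert_iff, mem_singleton_iff] at hu hw
  rcases hu with rfl | rfl | rfl <;> rcases hw with rfl | rfl | rfl <;> simp [near_iff]

lemma exists_shared_vertex {y y' : ℤ × ℤ} (h : Near y y') :
    ∃ w u u', w ∈ upTri y ∧ w ∈ upTri y' ∧ u ∈ upTri y ∧ u' ∈ upTri y' ∧ u ≠ w ∧ u' ≠ w ∧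
      Near u u' := by
  obtain ⟨d, rfl⟩ : ∃ d, y' = y + d := ⟨y' - y, by abel⟩
  have hd : d = (0, 0) ∨ d = (1, 0) ∨ d = (-1, 0) ∨ d = (0, 1) ∨ d = (0, -1) ∨ d = (1, -1) ∨
      d = (-1, 1) := by
    simp only [near_iff, Prod.fst_add, Prod.snd_add, add_sub_cancel_left, Prod.ext_iff] at h ⊢
    omega
  rcases hd with rfl | rfl | rfl | rfl | rfl | rfl | rfl <;>
  [use y, y + (1, 0), y + (1, 0); use y + (1, 0), y + (0, 1), y + (1, 1);
    use y, y + (0, 1), y + (-1, 1); use y + (0, 1), y + (1, 0), y + (1, 1);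
    use y, y + (1, 0), y + (1, -1); use y + (1, 0), y, y + (1, -1);
    use y + (0, 1), y, y + (-1, 1)]
  all_goals simp [upTri, near_iff, Prod.ext_iff]

/-- If the shared vertex has colour `v` it serves for both triangles; otherwise the two other
vertices of each triangle have colour `v`, and two of them are neighbours. -/
lemma exists_near_of_coarsen_eq {c : ℤ × ℤ → Bool} {v : Bool} {y y' : ℤ × ℤ}
    (h : Near y y') (hy : coarsen c y = v) (hy' : coarsen c y' = v) :
    ∃ z ∈ upTri y, ∃ z' ∈ upTri y', c z = v ∧ c z' = v ∧ Near z z' := by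
  obtain ⟨w, u, u', hw, hw', hu, hu', huw, hu'w, huu'⟩ := exists_shared_vertex h
  by_cases hcw : c w = v
  · exact ⟨w, hw, w, hw', hcw, hcw, near_of_mem_upTri hw hw⟩
  · refine ⟨u, hu, u', hu', ?_, ?_, huu'⟩
    · simpa [hy, hcw] using coarsen_eq_or (c := c) hu hw huw
    · simpa [hy', hcw] using coarsen_eq_or (c := c) hu' hw' hu'w

def tri (m : ℕ) : Set (ℤ × ℤ) := {z | 0 ≤ z.1 ∧ 0 ≤ z.2 ∧ z.1 + z.2 ≤ m}

lemma upTri_subset_tri {m : ℕ} {y : ℤ × ℤ} (hy : y ∈ tri m) : upTri y ⊆ tri (m + 1) := by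
  intro z hz
  simp only [upTri, mem_insert_iff, mem_singleton_iff, tri, mem_ofPred_eq] at hz hy ⊢
  rcases hz with rfl | rfl | rfl <;>
    simp only [Prod.fst_add, Prod.snd_add, add_zero, Nat.cast_add, Nat.cast_one] <;> omega

lemma step_of_mem_upTri {c : ℤ × ℤ → Bool} {v : Bool} {m : ℕ} {y z z' : ℤ × ℤ}
    (hy : y ∈ tri m) (hz : z ∈ upTri y) (hz' : z' ∈ upTri y) (hcz : c z = v) (hcz' : c z' = v) :
    Step (tri (m + 1) ∩ {z | c z = v}) z z' :=
  ⟨⟨upTri_subset_tri hy hz, hcz⟩, ⟨upTri_subset_tri hy hz', hcz'⟩, near_of_mem_upTri hz hz'⟩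

lemma Path.lift_coarsen {c : ℤ × ℤ → Bool} {v : Bool} {m : ℕ} {y y' z z' : ℤ × ℤ}
    (hyy' : Path (tri m ∩ {z | coarsen c z = v}) y y') (hy : y ∈ tri m)
    (hz : z ∈ upTri y) (hz' : z' ∈ upTri y') (hcz : c z = v) (hcz' : c z' = v) :
    Path (tri (m + 1) ∩ {z | c z = v}) z z' := by
  induction hyy' generalizing z' with
  | refl => exact .single (step_of_mem_upTri hy hz hz' hcz hcz')
  | @tail w y' _ hstep ih =>
    obtain ⟨⟨hw, hcw⟩, ⟨hy', hcy'⟩, hww'⟩ := hstep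
    obtain ⟨ζ, hζ, ζ', hζ', hcζ, hcζ', hζζ'⟩ := exists_near_of_coarsen_eq hww' hcw hcy'
    exact ((ih hζ hcζ).tail ⟨⟨upTri_subset_tri hw hζ, hcζ⟩, ⟨upTri_subset_tri hy' hζ', hcζ'⟩,
      hζζ'⟩).tail (step_of_mem_upTri hy' hζ' hz' hcζ' hcz')

/-- The Y theorem, by induction on `m`: a Y for `coarsen c` on `tri m` lifts to one for `c` on
`tri (m + 1)`. -/
theorem exists_monochromatic_Y (m : ℕ) (c : ℤ × ℤ → Bool) :
    ∃ (v : Bool) (a b d : ℤ × ℤ), a.1 = 0 ∧ b.2 = 0 ∧ d.1 + d.2 = m ∧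
      a ∈ tri m ∩ {z | c z = v} ∧ b ∈ tri m ∩ {z | c z = v} ∧
      Path (tri m ∩ {z | c z = v}) a d ∧ Path (tri m ∩ {z | c z = v}) b d := by
  induction m generalizing c with
  | zero =>
    exact ⟨c 0, 0, 0, 0, rfl, rfl, rfl, ⟨by simp [tri], rfl⟩, ⟨by simp [tri], rfl⟩, .refl, .refl⟩
  | succ m ih =>
    obtain ⟨v, a', b', d', ha', hb', hd', ⟨ha'm, hca'⟩, ⟨hb'm, hcb'⟩, had', hbd'⟩ :=
      ih (coarsen c)
    obtain ⟨-, hcd'⟩ := had'.mem ⟨ha'm, hca'⟩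
    obtain ⟨a, ha, ha1, hca⟩ := exists_mem_pair_of_coarsen c a' a' (a' + (0, 1))
      (by simp [upTri]) (by simp [upTri]) (by simp)
    obtain ⟨b, hb, hb2, hcb⟩ := exists_mem_pair_of_coarsen c b' b' (b' + (1, 0))
      (by simp [upTri]) (by simp [upTri]) (by simp)
    obtain ⟨d, hd, hd12, hcd⟩ := exists_mem_pair_of_coarsen c d' (d' + (1, 0)) (d' + (0, 1))
      (by simp [upTri]) (by simp [upTri]) (by simp [Prod.ext_iff])
    rw [hca'] at hca
    rw [hcb'] at hcb
    rw [hcd'] at hcd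
    refine ⟨v, a, b, d, ?_, ?_, ?_, ⟨upTri_subset_tri ha'm ha, hca⟩,
      ⟨upTri_subset_tri hb'm hb, hcb⟩, had'.lift_coarsen ha'm ha hd hca hcd,
      hbd'.lift_coarsen hb'm hb hd hcb hcd⟩
    · rcases ha1 with rfl | rfl <;> simpa using ha'
    · rcases hb2 with rfl | rfl <;> simpa using hb'
    · rcases hd12 with rfl | rfl <;>
        simp only [Prod.fst_add, Prod.snd_add, add_zero, Nat.cast_add, Nat.cast_one] <;> omega

def board (N : ℕ) : Set (ℤ × ℤ) := Icc 0 (N : ℤ) ×ˢ Icc 0 (N : ℤ)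

/-- The Hex theorem. Colour `tri (2 * N)` by `c` on the board, `true` above it and `false` to its
right; the piece of a monochromatic Y given by `exists_monochromatic_Y`, cut where it first leaves
the board, is the crossing. -/
theorem exists_monochromatic_crossing (N : ℕ) (c : ℤ × ℤ → Bool) :
    (∃ a u, a.2 = 0 ∧ u.2 = (N : ℤ) ∧ a ∈ board N ∩ {z | c z = true} ∧
      Path (board N ∩ {z | c z = true}) a u) ∨
    (∃ a u, a.1 = 0 ∧ u.1 = (N : ℤ) ∧ a ∈ board N ∩ {z | c z = false} ∧
      Path (board N ∩ {z | c z = false}) a u) := by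
  set c' : ℤ × ℤ → Bool := fun z => if N < z.2 then true else if N < z.1 then false else c z
  have htrue : ∀ z ∈ tri (2 * N) ∩ {z | c' z = true}, z.2 ≤ N →
      z ∈ board N ∩ {z | c z = true} := by
    rintro z ⟨hz, hcz⟩ hz2
    simp only [tri, board, c', mem_inter_iff, mem_ofPred_eq, mem_prod, mem_Icc] at hz hcz ⊢
    split_ifs at hcz <;> first | omega | exact ⟨by omega, hcz⟩
  have hfalse : ∀ z ∈ tri (2 * N) ∩ {z | c' z = false}, z.1 ≤ N →
      z ∈ board N ∩ {z | c z = false} := by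
    rintro z ⟨hz, hcz⟩ hz1
    simp only [tri, board, c', mem_inter_iff, mem_ofPred_eq, mem_prod, mem_Icc] at hz hcz ⊢
    split_ifs at hcz <;> first | omega | exact ⟨by omega, hcz⟩
  obtain ⟨v, a, b, d, ha1, hb2, hd, ha, hb, had, hbd⟩ := exists_monochromatic_Y (2 * N) c'
  cases v
  · have hdN : (N : ℤ) ≤ d.1 := by
      by_contra h
      obtain ⟨⟨-, -, hd2⟩, -⟩ := hfalse d (had.mem ha) (by omega)
      omega
    obtain ⟨u, hu, hau⟩ := had.exists_hits_level Prod.fst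
      (fun x y h => by have := near_iff.1 h.2.2; omega) (by omega) hdN
    refine .inr ⟨a, u, ha1, hu, hfalse a ha (by omega), Relation.ReflTransGen.mono ?_ _ _ hau⟩
    exact fun x y h => ⟨hfalse x h.1.1 h.2.1, hfalse y h.1.2.1 h.2.2, h.1.2.2⟩
  · have hdN : (N : ℤ) ≤ d.2 := by
      by_contra h
      obtain ⟨⟨⟨-, hd1⟩, -⟩, -⟩ := htrue d (hbd.mem hb) (by omega)
      omega
    obtain ⟨u, hu, hbu⟩ := hbd.exists_hits_level Prod.snd
      (fun x y h => by have := near_iff.1 h.2.2; omega) (by omega) hdN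
    refine .inl ⟨b, u, hb2, hu, htrue b hb (by omega), Relation.ReflTransGen.mono ?_ _ _ hbu⟩
    exact fun x y h => ⟨htrue x h.1.1 h.2.1, htrue y h.1.2.1 h.2.2, h.1.2.2⟩

lemma Path.exists_mem_of_ball_subset {τ : Type*} {W : τ → Set (ℝ × ℝ)}
    (hW : Pairwise (Disjoint on W)) {p : ℤ × ℤ → ℝ × ℝ} {δ : ℝ}
    (hp : ∀ q q', Near q q' → dist (p q) (p q') < δ) {X : Set (ℤ × ℤ)}
    (hX : ∀ q ∈ X, ∃ i, ball (p q) δ ⊆ W i) {a u : ℤ × ℤ} (hau : Path X a u) (ha : a ∈ X) :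
    ∃ i, p a ∈ W i ∧ p u ∈ W i := by
  have center_mem {q} : p q ∈ ball (p q) δ := mem_ball.2 (hp q q (.refl q))
  induction hau with
  | refl =>
    obtain ⟨i, hi⟩ := hX a ha
    exact ⟨i, hi center_mem, hi center_mem⟩
  | @tail x y _ hxy ih =>
    obtain ⟨i, hai, hxi⟩ := ih
    obtain ⟨j, hj⟩ := hX y hxy.2.1
    have hxj : p x ∈ W j := hj (mem_ball.2 (hp x y hxy.2.2))
    obtain rfl : i = j := by
      by_contra hij
      exact Set.disjoint_left.1 (hW hij) hxi hxj
    exact ⟨i, hai, hj center_mem⟩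

end Hex

/-- Grid points `p q` of mesh `s` below a Lebesgue number `δ` are coloured by whether their
`δ`-ball lies in some `U i` (otherwise it lies in some `V j`); along a monochromatic Hex path
consecutive balls overlap, so by disjointness they all lie in the same member of the family. -/
theorem exists_crossing_of_open_cover {ι κ : Type*} {U : ι → Set (ℝ × ℝ)} {V : κ → Set (ℝ × ℝ)}
    (hU : ∀ i, IsOpen (U i)) (hV : ∀ j, IsOpen (V j))
    (hUd : Pairwise (Disjoint on U)) (hVd : Pairwise (Disjoint on V)) {L : ℝ} (hL : 0 ≤ L)
    (hcov : Icc 0 L ×ˢ Icc 0 L ⊆ (⋃ i, U i) ∪ ⋃ j, V j) :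
    (∃ i x y, x ∈ U i ∧ y ∈ U i ∧ x.2 = 0 ∧ y.2 = L) ∨
    (∃ j x y, x ∈ V j ∧ y ∈ V j ∧ x.1 = 0 ∧ y.1 = L) := by
  classical
  obtain ⟨δ, hδ, hleb⟩ := lebesgue_number_lemma_of_metric (c := Sum.elim U V)
    (isCompact_Icc.prod isCompact_Icc) (Sum.rec hU hV) (by rwa [iUnion_sum])
  obtain ⟨N, hN⟩ := exists_nat_gt (L / δ)
  have hN0 : (0 : ℝ) < N := (div_nonneg hL hδ.le).trans_lt hN
  set s := L / N
  have hs0 : 0 ≤ s := div_nonneg hL hN0.le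
  have hsδ : s < δ := by rwa [div_lt_iff₀ hN0, ← div_lt_iff₀' hδ]
  have hsN : s * ((N : ℤ) : ℝ) = L := by push_cast; exact div_mul_cancel₀ L hN0.ne'
  set p : ℤ × ℤ → ℝ × ℝ := fun q => (s * q.1, s * q.2)
  have hpd : ∀ q q', Hex.Near q q' → dist (p q) (p q') < δ := by
    intro q q' h
    have h1 : |(q.1 : ℝ) - q'.1| ≤ 1 := by rw [abs_sub_comm]; exact_mod_cast h.1
    have h2 : |(q.2 : ℝ) - q'.2| ≤ 1 := by rw [abs_sub_comm]; exact_mod_cast h.2.1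
    refine lt_of_le_of_lt ?_ hsδ
    simp only [p, Prod.dist_eq, Real.dist_eq, ← mul_sub, abs_mul, abs_of_nonneg hs0]
    exact max_le (mul_le_of_le_one_right hs0 h1) (mul_le_of_le_one_right hs0 h2)
  have hball : ∀ q ∈ Hex.board N, (∃ i, ball (p q) δ ⊆ U i) ∨ ∃ j, ball (p q) δ ⊆ V j := by
    rintro q ⟨⟨hq1, hq1'⟩, ⟨hq2, hq2'⟩⟩
    have hcoord {k : ℤ} (hk : 0 ≤ k) (hk' : k ≤ N) : s * k ∈ Icc 0 L :=
      ⟨by positivity, hsN ▸ mul_le_mul_of_nonneg_left (by exact_mod_cast hk') hs0⟩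
    obtain ⟨i | j, h⟩ := hleb (p q) ⟨hcoord hq1 hq1', hcoord hq2 hq2'⟩
    exacts [.inl ⟨i, h⟩, .inr ⟨j, h⟩]
  rcases Hex.exists_monochromatic_crossing N (fun q => decide (∃ i, ball (p q) δ ⊆ U i)) with
    ⟨a, u, ha, hu, hmem, hau⟩ | ⟨a, u, ha, hu, hmem, hau⟩
  · obtain ⟨i, hai, hui⟩ :=
      hau.exists_mem_of_ball_subset hUd hpd (fun q hq => by simpa using hq.2) hmem
    exact .inl ⟨i, p a, p u, hai, hui, by simp [p, ha], by simp only [p, hu, hsN]⟩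
  · obtain ⟨j, haj, huj⟩ := hau.exists_mem_of_ball_subset hVd hpd
      (fun q hq => (hball q hq.1).resolve_left (by simpa using hq.2)) hmem
    exact .inr ⟨j, p a, p u, haj, huj, by simp [p, ha], by simp only [p, hu, hsN]⟩

namespace LatticeTranslates

def latticePoint (g : ℤ × ℤ) : ℝ × ℝ := ((g.1 : ℝ), (g.2 : ℝ))

lemma tendsto_latticePoint_cofinite_cocompact :
    Tendsto latticePoint cofinite (cocompact (ℝ × ℝ)) := by
  rw [← coprod_cofinite, ← coprod_cocompact]
  exact Int.tendsto_coe_cofinite.prodMap_coprod Int.tendsto_coe_cofinite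

lemma locallyFinite_translates {K : Set (ℝ × ℝ)} (hK : IsCompact K) :
    LocallyFinite fun g : ℤ × ℤ => {z | z - latticePoint g ∈ K} := by
  intro x
  refine ⟨closedBall x 1, closedBall_mem_nhds x one_pos, ?_⟩
  refine (tendsto_cofinite_cocompact_iff.1 tendsto_latticePoint_cofinite_cocompact _
    (((isCompact_closedBall x 1).prod hK).image continuous_sub)).subset ?_
  rintro g ⟨z, hzK, hz⟩
  exact ⟨(z, z - latticePoint g), ⟨hz, hzK⟩, sub_sub_cancel _ _⟩

/-- For `f = Prod.snd`: the points all of whose representatives lie in row `k`. -/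
def band (K : Set (ℝ × ℝ)) (f : ℤ × ℤ → ℤ) (k : ℤ) : Set (ℝ × ℝ) :=
  {z | ∀ g, z - latticePoint g ∈ K → f g = k}

lemma isOpen_band {K : Set (ℝ × ℝ)} (hK : IsCompact K) (f : ℤ × ℤ → ℤ) (k : ℤ) :
    IsOpen (band K f k) := by
  have hclosed : IsClosed (⋃ g, {z | f g ≠ k ∧ z - latticePoint g ∈ K}) := by
    refine ((locallyFinite_translates hK).subset fun g z hz => hz.2).isClosed_iUnion fun g => ?_
    by_cases h : f g = k
    · simp [h]
    · simp only [h, ne_eq, not_false_eq_true, true_and]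
      exact hK.isClosed.preimage (continuous_sub_right _)
  convert hclosed.isOpen_compl
  ext z
  simp only [band, mem_compl_iff, mem_iUnion, mem_ofPred_eq, not_exists, not_and]
  exact forall_congr' fun _ => not_imp_not.symm

lemma pairwise_disjoint_band {K : Set (ℝ × ℝ)} (hrep : ∀ z, ∃ g, z - latticePoint g ∈ K)
    (f : ℤ × ℤ → ℤ) : Pairwise (Disjoint on band K f) := by
  intro k k' hkk'
  refine Set.disjoint_left.2 fun z hz hz' => hkk' ?_
  obtain ⟨g, hg⟩ := hrep z
  exact (hz g hg).symm.trans (hz' g hg)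

lemma mem_iUnion_band {K : Set (ℝ × ℝ)} (hrep : ∀ z, ∃ g, z - latticePoint g ∈ K)
    (haxial : ∀ z g g', z - latticePoint g ∈ K → z - latticePoint g' ∈ K →
      g.1 = g'.1 ∨ g.2 = g'.2)
    (z : ℝ × ℝ) : z ∈ (⋃ k, band K Prod.snd k) ∪ ⋃ k, band K Prod.fst k := by
  obtain ⟨g₀, hg₀⟩ := hrep z
  by_cases hrow : z ∈ band K Prod.snd g₀.2
  · exact .inl (mem_iUnion.2 ⟨_, hrow⟩)
  · obtain ⟨g, hg, hg2⟩ : ∃ g, z - latticePoint g ∈ K ∧ g.2 ≠ g₀.2 := by simpa [band] using hrow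
    refine .inr (mem_iUnion.2 ⟨g₀.1, fun h hh => ?_⟩)
    have := haxial z g g₀ hg hg₀
    have := haxial z h g₀ hh hg₀
    have := haxial z h g hh hg
    omega

lemma abs_sub_sub_le_diam {K : Set (ℝ × ℝ)} (hK : Bornology.IsBounded K) {x y a b : ℝ × ℝ}
    (hx : x - a ∈ K) (hy : y - b ∈ K) :
    |x.1 - y.1 - (a.1 - b.1)| ≤ diam K ∧ |x.2 - y.2 - (a.2 - b.2)| ≤ diam K := by
  have h := dist_le_diam_of_mem hK hx hy
  rwa [Prod.dist_eq, Real.dist_eq, Real.dist_eq, max_le_iff, Prod.fst_sub, Prod.fst_sub,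
    Prod.snd_sub, Prod.snd_sub, sub_sub_sub_comm, sub_sub_sub_comm x.2] at h

end LatticeTranslates

open LatticeTranslates

theorem no_compact_fundamental_domain_with_axial_differences :
    ¬ ∃ K : Set (ℝ × ℝ), IsCompact K ∧
      (∀ x : ℝ × ℝ, ∃ y ∈ K, ∃ a b : ℤ, x - y = ((a : ℝ), (b : ℝ))) ∧
      (∀ p ∈ K - K, (∃ a b : ℤ, p = ((a : ℝ), (b : ℝ))) → p.1 = 0 ∨ p.2 = 0) := by
  rintro ⟨K, hK, hcov, hax⟩
  have hrep : ∀ z, ∃ g, z - latticePoint g ∈ K := fun z => by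
    obtain ⟨y, hy, a, b, h⟩ := hcov z
    exact ⟨(a, b), by rwa [latticePoint, ← h, sub_sub_cancel]⟩
  have haxial : ∀ z g g', z - latticePoint g ∈ K → z - latticePoint g' ∈ K →
      g.1 = g'.1 ∨ g.2 = g'.2 := by
    intro z g g' hg hg'
    have := hax _ (sub_mem_sub hg' hg) ⟨g.1 - g'.1, g.2 - g'.2, by simp [latticePoint]⟩
    simpa [latticePoint, sub_eq_zero] using this
  obtain ⟨k, x, y, hx, hy, hx0, hyL⟩ | ⟨k, x, y, hx, hy, hx0, hyL⟩ :=
    exists_crossing_of_open_cover (isOpen_band hK Prod.snd) (isOpen_band hK Prod.fst)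
      (pairwise_disjoint_band hrep _) (pairwise_disjoint_band hrep _)
      (by positivity : 0 ≤ diam K + 1) fun z _ => mem_iUnion_band hrep haxial z
  all_goals
    obtain ⟨g, hg⟩ := hrep x
    obtain ⟨g', hg'⟩ := hrep y
    have hdiam := abs_sub_sub_le_diam hK.isBounded hg hg'
    have hgg' := (hx g hg).trans (hy g' hg').symm
    norm_num [latticePoint, hx0, hyL, hgg', abs_le] at hdiam
end

section
/- The set A = {(−1,0), (0,−1), (0,0), (1,0), (0,1)} ⊆ ℤ², although finite, symmetric, containing 0, and generating ℤ² as a group, is not of the form (K − K) ∩ ℤ² for any compact K ⊆ ℝ² with K + ℤ² = ℝ². -/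
/-!
If `K` existed, choose for every `x ∈ ℝ²` a lattice point `φ x` with `x - φ x ∈ K`. Since `K - K` is
compact and meets `ℤ²` only in the plus set, `φ x' - φ x` lies in the plus set whenever `x` and `x'`
are close, while `φ x` stays within bounded distance of `x`. Sampling `φ` on a fine grid of a large
square therefore gives a map of the square into the graph on `ℤ²` whose edges are the plus-set
steps; every grid cell collapses to at most an edge (that graph has no triangles), yet the boundary
of the square winds once around `(1/2, 1/2)`. Counting signed crossings of the ray
`{(t, 1/2) | t ≥ 1/2}` gives `1` along the boundary but `0` over every cell.
-/

open Pointwise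

/-- The set `{(−1,0), (0,−1), (0,0), (1,0), (0,1)} ⊆ ℤ²`. -/
def plusSet : Set (ℤ × ℤ) := {(-1, 0), (0, -1), (0, 0), (1, 0), (0, 1)}

open Finset Metric

lemma mem_plusSet_iff (p : ℤ × ℤ) : p ∈ plusSet ↔ p.1.natAbs + p.2.natAbs ≤ 1 := by
  obtain ⟨a, b⟩ := p
  simp only [plusSet, Set.mem_insert_iff, Set.mem_singleton_iff, Prod.ext_iff]
  omega

lemma neg_plusSet : -plusSet = plusSet := by
  ext p
  simp only [Set.mem_neg, mem_plusSet_iff, Prod.fst_neg, Prod.snd_neg, Int.natAbs_neg]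

lemma closure_plusSet : AddSubgroup.closure plusSet = ⊤ := by
  rw [AddSubgroup.eq_top_iff']
  rintro ⟨a, b⟩
  have h₁ : ((1, 0) : ℤ × ℤ) ∈ AddSubgroup.closure plusSet :=
    AddSubgroup.subset_closure (by simp [plusSet])
  have h₂ : ((0, 1) : ℤ × ℤ) ∈ AddSubgroup.closure plusSet :=
    AddSubgroup.subset_closure (by simp [plusSet])
  have hab : ((a, b) : ℤ × ℤ) = a • ((1, 0) : ℤ × ℤ) + b • ((0, 1) : ℤ × ℤ) := by simp
  rw [hab]
  exact add_mem (zsmul_mem h₁ a) (zsmul_mem h₂ b)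

def upperIndicator (v : ℤ × ℤ) : ℤ := if 1 ≤ v.2 then 1 else 0

/-- The signed number of times the segment from `v` to `w` crosses the ray
`{(t, 1/2) | t ≥ 1/2}`, when `v` and `w` are neighbours in the plus graph. -/
def crossing (v w : ℤ × ℤ) : ℤ :=
  if 1 ≤ v.1 ∧ 1 ≤ w.1 then upperIndicator w - upperIndicator v else 0

lemma crossing_eq_zero_of_upperIndicator_eq {v w : ℤ × ℤ}
    (h : upperIndicator v = upperIndicator w) : crossing v w = 0 := by
  unfold crossing
  split_ifs <;> simp [h]

/-- Two neighbours of a point of the half-plane `x ≤ 0` that lie in `x ≥ 1` coincide. -/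
lemma crossing_eq_zero_of_sub_mem_plusSet {u w z : ℤ × ℤ} (hu : u - z ∈ plusSet)
    (hw : w - z ∈ plusSet) (hz : z.1 ≤ 0) : crossing u w = 0 := by
  unfold crossing
  split_ifs with h
  · rw [mem_plusSet_iff] at hu hw
    have huw : u = w := by
      simp only [Prod.fst_sub, Prod.snd_sub] at hu hw
      ext <;> omega
    rw [huw, sub_self]
  · rfl

lemma crossing_add_crossing_eq_of_pairwise_sub_mem {a b c d : ℤ × ℤ}
    (h : ∀ p ∈ ({a, b, c, d} : Set (ℤ × ℤ)), ∀ q ∈ ({a, b, c, d} : Set (ℤ × ℤ)),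
      q - p ∈ plusSet) :
    crossing a b + crossing b d = crossing a c + crossing c d := by
  by_cases hright : ∀ p ∈ ({a, b, c, d} : Set (ℤ × ℤ)), 1 ≤ p.1
  · simp only [crossing, hright a (by simp), hright b (by simp), hright c (by simp),
      hright d (by simp), and_self, if_true]
    ring
  · push Not at hright
    obtain ⟨z, hz, hz₁⟩ := hright
    have hzero : ∀ u ∈ ({a, b, c, d} : Set (ℤ × ℤ)), ∀ w ∈ ({a, b, c, d} : Set (ℤ × ℤ)),
        crossing u w = 0 := fun u hu w hw =>
      crossing_eq_zero_of_sub_mem_plusSet (h z hz u hu) (h z hz w hw) (by omega)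
    rw [hzero a (by simp) b (by simp), hzero b (by simp) d (by simp),
      hzero a (by simp) c (by simp), hzero c (by simp) d (by simp)]

/-- Discrete Stokes theorem for the `1`-cochain on the grid `[0, N]²` with value `H i j` on the edge
from `(i, j)` to `(i + 1, j)` and `V i j` on the edge from `(i, j)` to `(i, j + 1)`. -/
lemma sum_boundary_eq_zero_of_cell {G : Type*} [AddCommGroup G] (H V : ℕ → ℕ → G) (N : ℕ)
    (hcell : ∀ i < N, ∀ j < N, H i j + V (i + 1) j = V i j + H i (j + 1)) :
    ∑ i ∈ range N, (H i 0 - H i N) + ∑ j ∈ range N, (V N j - V 0 j) = 0 := by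
  have hrow : ∀ i, ∑ j ∈ range N, (H i j - H i (j + 1)) = H i 0 - H i N :=
    fun i => sum_range_sub' (H i) N
  have hcol : ∀ j, ∑ i ∈ range N, (V (i + 1) j - V i j) = V N j - V 0 j :=
    fun j => sum_range_sub (V · j) N
  rw [← sum_congr rfl fun i _ => hrow i, ← sum_congr rfl fun j _ => hcol j,
    sum_comm (f := fun j i => V (i + 1) j - V i j), ← sum_add_distrib]
  refine sum_eq_zero fun i hi => ?_
  rw [← sum_add_distrib]
  refine sum_eq_zero fun j hj => ?_
  rw [sub_add_sub_comm, hcell i (mem_range.1 hi) j (mem_range.1 hj), add_comm (V i j), sub_self]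

/-- A discrete map of the square `[0, N]²` to `ℤ²`, continuous in the sense that king moves go to
steps in `A`, whose boundary winds around `(1/2, 1/2)`. -/
structure IsWindingGridMap (A : Set (ℤ × ℤ)) (N : ℕ) (g : ℕ → ℕ → ℤ × ℤ) : Prop where
  sub_mem : ∀ i j i' j', i ≤ i' + 1 → i' ≤ i + 1 → j ≤ j' + 1 → j' ≤ j + 1 → g i' j' - g i j ∈ A
  left : ∀ j, (g 0 j).1 ≤ 0
  right : ∀ j, 1 ≤ (g N j).1
  bottom : ∀ i, (g i 0).2 ≤ 0
  top : ∀ i, 1 ≤ (g i N).2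

lemma not_isWindingGridMap_plusSet (N : ℕ) (g : ℕ → ℕ → ℤ × ℤ) :
    ¬ IsWindingGridMap plusSet N g := by
  intro hg
  set H : ℕ → ℕ → ℤ := fun i j => crossing (g i j) (g (i + 1) j)
  set V : ℕ → ℕ → ℤ := fun i j => crossing (g i j) (g i (j + 1))
  have hcell : ∀ i < N, ∀ j < N, H i j + V (i + 1) j = V i j + H i (j + 1) := by
    intro i _ j _
    refine crossing_add_crossing_eq_of_pairwise_sub_mem ?_
    simp only [Set.mem_insert_iff, Set.mem_singleton_iff]
    rintro p (rfl | rfl | rfl | rfl) q (rfl | rfl | rfl | rfl) <;>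
      exact hg.sub_mem _ _ _ _ (by omega) (by omega) (by omega) (by omega)
  have hupper_bottom : ∀ i, upperIndicator (g i 0) = 0 :=
    fun i => if_neg (by have := hg.bottom i; omega)
  have hupper_top : ∀ i, upperIndicator (g i N) = 1 := fun i => if_pos (hg.top i)
  have hH : ∀ i, H i 0 - H i N = 0 := fun i => by
    simp only [H]
    rw [crossing_eq_zero_of_upperIndicator_eq (by rw [hupper_bottom, hupper_bottom]),
      crossing_eq_zero_of_upperIndicator_eq (by rw [hupper_top, hupper_top]), sub_self]
  have hV₀ : ∀ j, V 0 j = 0 := fun j => if_neg fun h => by have := hg.left j; omega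
  have hV : ∀ j, V N j = upperIndicator (g N (j + 1)) - upperIndicator (g N j) :=
    fun j => if_pos ⟨hg.right j, hg.right (j + 1)⟩
  have hboundary := sum_boundary_eq_zero_of_cell H V N hcell
  simp only [hH, hV₀, hV, sub_zero, sum_const_zero, zero_add] at hboundary
  rw [sum_range_sub (fun j => upperIndicator (g N j)), hupper_top, hupper_bottom] at hboundary
  exact one_ne_zero hboundary

def castPair : ℤ × ℤ →+ ℝ × ℝ := (Int.castAddHom ℝ).prodMap (Int.castAddHom ℝ)

lemma castPair_apply (p : ℤ × ℤ) : castPair p = ((p.1 : ℝ), (p.2 : ℝ)) := rfl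

lemma isClosed_image_castPair (s : Set (ℤ × ℤ)) : IsClosed (castPair '' s) :=
  (Int.isClosedEmbedding_coe_real.prodMap Int.isClosedEmbedding_coe_real).isClosedMap s
    (isClosed_discrete s)

lemma exists_pos_sub_mem_of_dist_lt {K : Set (ℝ × ℝ)} {A : Set (ℤ × ℤ)} (hK : IsCompact K)
    (hA : ∀ p, castPair p ∈ K - K → p ∈ A) :
    ∃ δ > 0, ∀ x x' v w, x - castPair v ∈ K → x' - castPair w ∈ K → dist x x' < δ →
      w - v ∈ A := by
  have hKK : IsCompact (K - K) := by
    rw [sub_eq_add_neg]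
    exact hK.add hK.neg
  obtain ⟨δ, hδ, hsub⟩ :=
    hKK.exists_thickening_subset_open (isClosed_image_castPair Aᶜ).isOpen_compl
      (by rintro _ hz ⟨p, hp, rfl⟩; exact hp (hA p hz))
  refine ⟨δ, hδ, fun x x' v w hv hw hxx' => ?_⟩
  by_contra hvw
  refine hsub (mem_thickening_iff.2 ⟨_, Set.sub_mem_sub hv hw, ?_⟩) ⟨w - v, hvw, rfl⟩
  rwa [dist_eq_norm, map_sub, show castPair w - castPair v - (x - castPair v - (x' - castPair w))
    = x' - x by abel, ← dist_eq_norm, dist_comm]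

lemma abs_sub_le_of_sub_castPair_mem {K : Set (ℝ × ℝ)} {C : ℝ} (hC : ∀ y ∈ K, ‖y‖ ≤ C)
    {x : ℝ × ℝ} {v : ℤ × ℤ} (hv : x - castPair v ∈ K) :
    |x.1 - v.1| ≤ C ∧ |x.2 - v.2| ≤ C := by
  simpa [Prod.norm_def, castPair_apply, Real.norm_eq_abs] using hC _ hv

lemma exists_isWindingGridMap {K : Set (ℝ × ℝ)} {A : Set (ℤ × ℤ)} (hK : IsCompact K)
    (hcover : ∀ x, ∃ v, x - castPair v ∈ K) (hA : ∀ p, castPair p ∈ K - K → p ∈ A) :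
    ∃ N g, IsWindingGridMap A N g := by
  obtain ⟨δ, hδ, hnear⟩ := exists_pos_sub_mem_of_dist_lt hK hA
  obtain ⟨C, hC₀, hC⟩ := hK.isBounded.exists_pos_norm_le
  choose φ hφ using hcover
  obtain ⟨N, hN⟩ := exists_nat_gt (2 * (C + 1) / δ)
  have hN₀ : (0 : ℝ) < N := lt_trans (by positivity) hN
  set ε := 2 * (C + 1) / N
  have hε₀ : 0 < ε := by positivity
  have hε : ε < δ := by
    rw [div_lt_iff₀ hδ] at hN
    rw [div_lt_iff₀ hN₀]
    linarith
  set t : ℕ → ℝ := fun i => -(C + 1) + ε * i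
  have ht : ∀ i i', i ≤ i' + 1 → i' ≤ i + 1 → |t i - t i'| < δ := fun i i' h h' => by
    have h₁ : (i : ℝ) ≤ i' + 1 := by exact_mod_cast h
    have h₂ : (i' : ℝ) ≤ i + 1 := by exact_mod_cast h'
    simp only [t, abs_lt]
    constructor <;> nlinarith
  have ht₀ : t 0 = -(C + 1) := by simp [t]
  have htN : t N = C + 1 := by simp [t, ε, hN₀.ne']; ring
  have hk_nonpos : ∀ k : ℤ, |-(C + 1) - k| ≤ C → k ≤ 0 := fun k h => by
    have : (k : ℝ) ≤ 0 := by linarith [(abs_le.1 h).1]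
    exact_mod_cast this
  have hk_pos : ∀ k : ℤ, |C + 1 - k| ≤ C → 1 ≤ k := fun k h => by
    have : (1 : ℝ) ≤ k := by linarith [(abs_le.1 h).2]
    exact_mod_cast this
  have hbound := fun i j => abs_sub_le_of_sub_castPair_mem hC (hφ (t i, t j))
  refine ⟨N, fun i j => φ (t i, t j), ⟨fun i j i' j' hi hi' hj hj' => ?_, fun j => ?_,
    fun j => ?_, fun i => ?_, fun i => ?_⟩⟩
  · refine hnear _ _ _ _ (hφ _) (hφ _) ?_
    rw [Prod.dist_eq, Real.dist_eq, Real.dist_eq]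
    exact max_lt (ht i i' hi hi') (ht j j' hj hj')
  · exact hk_nonpos _ (ht₀ ▸ (hbound 0 j).1)
  · exact hk_pos _ (htN ▸ (hbound N j).1)
  · exact hk_nonpos _ (ht₀ ▸ (hbound i 0).2)
  · exact hk_pos _ (htN ▸ (hbound i N).2)

theorem plusSet_not_difference_set :
    plusSet.Finite ∧ -plusSet = plusSet ∧ (0, 0) ∈ plusSet ∧
      AddSubgroup.closure plusSet = ⊤ ∧
      ¬ ∃ K : Set (ℝ × ℝ), IsCompact K ∧
        (∀ x : ℝ × ℝ, ∃ y ∈ K, ∃ a b : ℤ, x - y = ((a : ℝ), (b : ℝ))) ∧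
        (∀ p : ℤ × ℤ, p ∈ plusSet ↔ ((p.1 : ℝ), (p.2 : ℝ)) ∈ K - K) := by
  refine ⟨by simp [plusSet], neg_plusSet, by simp [plusSet], closure_plusSet, ?_⟩
  rintro ⟨K, hK, hcover, hdiff⟩
  have hcover' : ∀ x, ∃ v, x - castPair v ∈ K := fun x => by
    obtain ⟨y, hy, a, b, hxy⟩ := hcover x
    exact ⟨(a, b), by rwa [castPair_apply, ← hxy, sub_sub_cancel]⟩
  obtain ⟨N, g, hg⟩ := exists_isWindingGridMap hK hcover' fun p hp => (hdiff p).2 hp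
  exact not_isWindingGridMap_plusSet N g hg
end

section
/- If K ⊆ ℝⁿ is compact and K + ℤⁿ = ℝⁿ, then the set A = (K − K) ∩ ℤⁿ is a finite generating set of the group ℤⁿ. -/
/-!
Let `H` be the subgroup generated by `A = (K - K) ∩ ℤⁿ`. The translates of `K` by `H` and by
`ℤⁿ \ H` cover `ℝⁿ` and are disjoint, since two points `y + h = y' + z` with `y, y' ∈ K` give
`z - h ∈ A`. Both unions are closed because `ℤⁿ` is discrete and `K` is compact, so by
connectedness of `ℝⁿ` the second one is empty, i.e. `H = ℤⁿ`. Finiteness of `A` is discreteness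
of `ℤⁿ` again.
-/

open Pointwise

/-- The integer vector `z ∈ ℤⁿ` viewed as a point of `ℝⁿ`. -/
noncomputable def intVec (n : ℕ) (z : Fin n → ℤ) : EuclideanSpace ℝ (Fin n) :=
  (WithLp.equiv 2 (Fin n → ℝ)).symm (fun i => (z i : ℝ))

open Filter

section DiscreteImage

variable {X Y : Type*} [TopologicalSpace Y] {f : X → Y}

lemma Filter.Tendsto.finite_preimage_of_isCompact (hf : Tendsto f cofinite (cocompact Y))
    {s : Set Y} (hs : IsCompact s) : (f ⁻¹' s).Finite := by
  simpa only [mem_map, mem_cofinite, Set.preimage_compl, compl_compl] using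
    hf hs.compl_mem_cocompact

lemma Filter.Tendsto.isClosed_image_of_cofinite_cocompact [T2Space Y] [CompactlyCoherentSpace Y]
    (hf : Tendsto f cofinite (cocompact Y)) (s : Set X) : IsClosed (f '' s) := by
  let _ : TopologicalSpace X := ⊥
  have : DiscreteTopology X := ⟨rfl⟩
  have hproper : IsProperMap f :=
    isProperMap_iff_tendsto_cocompact.2
      ⟨continuous_of_discreteTopology, by rwa [cocompact_eq_cofinite]⟩
  exact hproper.isClosedMap s (isClosed_discrete s)

end DiscreteImage

section TranslatesOfCompact

variable {M E : Type*} [AddGroup M] [AddCommGroup E] (ι : M →+ E) {K : Set E}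

lemma disjoint_add_image_add_image_compl {H : AddSubgroup M} (hH : ι ⁻¹' (K - K) ⊆ H) :
    Disjoint (K + ι '' H) (K + ι '' (H : Set M)ᶜ) := by
  rw [Set.disjoint_left]
  rintro _ ⟨y, hy, _, ⟨h, hh, rfl⟩, rfl⟩ ⟨y', hy', _, ⟨m, hm, rfl⟩, hsum⟩
  have hdiff : m - h ∈ H := hH ⟨y, hy, y', hy', by
    rw [map_sub, sub_eq_sub_iff_add_eq_add, add_comm (ι m)]
    exact hsum.symm⟩
  exact hm (by simpa using H.add_mem hdiff hh)

variable [TopologicalSpace E] [IsTopologicalAddGroup E] [T2Space E] [CompactlyCoherentSpace E]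
  [PreconnectedSpace E]

theorem AddSubgroup.closure_preimage_sub_eq_top (hι : Tendsto ι cofinite (cocompact E))
    (hK : IsCompact K) (hcover : ∀ x : E, ∃ y ∈ K, ∃ m : M, x = y + ι m) :
    AddSubgroup.closure (ι ⁻¹' (K - K)) = ⊤ := by
  set H := AddSubgroup.closure (ι ⁻¹' (K - K))
  have hclosed (S : Set M) : IsClosed (K + ι '' S) :=
    (hι.isClosed_image_of_cofinite_cocompact S).add_left_of_isCompact hK
  have hdisj : Disjoint (K + ι '' H) (K + ι '' (H : Set M)ᶜ) :=
    disjoint_add_image_add_image_compl ι AddSubgroup.subset_closure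
  have hcompl : IsCompl (K + ι '' H) (K + ι '' (H : Set M)ᶜ) := by
    refine ⟨hdisj, codisjoint_iff.2 (Set.eq_univ_of_forall fun x => ?_)⟩
    obtain ⟨y, hy, m, rfl⟩ := hcover x
    by_cases hm : m ∈ H
    · exact Or.inl ⟨y, hy, ι m, ⟨m, hm, rfl⟩, rfl⟩
    · exact Or.inr ⟨y, hy, ι m, ⟨m, hm, rfl⟩, rfl⟩
  obtain ⟨y₀, hy₀, -⟩ := hcover 0
  have huniv : K + ι '' H = Set.univ :=
    IsClopen.eq_univ ⟨hclosed _, hcompl.eq_compl ▸ (hclosed _).isOpen_compl⟩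
      ⟨y₀ + ι 0, y₀, hy₀, ι 0, ⟨0, H.zero_mem, rfl⟩, rfl⟩
  refine (AddSubgroup.eq_top_iff' H).2 fun m => by_contra fun hm => ?_
  exact Set.disjoint_left.1 hdisj (huniv ▸ Set.mem_univ (y₀ + ι m))
    ⟨y₀, hy₀, ι m, ⟨m, hm, rfl⟩, rfl⟩

end TranslatesOfCompact

noncomputable def intVecHom (n : ℕ) : (Fin n → ℤ) →+ EuclideanSpace ℝ (Fin n) where
  toFun := intVec n
  map_zero' := by ext; simp [intVec]
  map_add' z w := by ext; simp [intVec]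

lemma tendsto_intVec_cofinite_cocompact (n : ℕ) :
    Tendsto (intVec n) cofinite (cocompact (EuclideanSpace ℝ (Fin n))) := by
  have hcoord := Tendsto.pi_map_coprodᵢ (f := fun _ : Fin n => cofinite)
    (g := fun _ => cocompact ℝ) fun _ => Int.tendsto_coe_cofinite
  rw [coprodᵢ_cofinite, coprodᵢ_cocompact] at hcoord
  rw [← (PiLp.homeomorph 2 fun _ : Fin n => ℝ).symm.map_cocompact]
  exact tendsto_map.comp hcoord

theorem diffSet_lattice_generates (n : ℕ) (K : Set (EuclideanSpace ℝ (Fin n)))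
    (hK : IsCompact K)
    (hcover : ∀ x : EuclideanSpace ℝ (Fin n), ∃ y ∈ K, ∃ z : Fin n → ℤ,
      x = y + intVec n z) :
    (intVec n ⁻¹' (K - K)).Finite ∧
      AddSubgroup.closure (intVec n ⁻¹' (K - K)) = ⊤ :=
  ⟨(tendsto_intVec_cofinite_cocompact n).finite_preimage_of_isCompact
      (by simpa only [sub_eq_add_neg] using hK.add hK.neg),
    AddSubgroup.closure_preimage_sub_eq_top (intVecHom n) (tendsto_intVec_cofinite_cocompact n)
      hK hcover⟩
end

section
/- Let p : ℝ² → T = ℝ²/ℤ² be the covering map, f : [0,1] → T a simple closed null-homotopic curve, f̃ a lift of f (which is a simple closed curve in ℝ²), Ũ the bounded Jordan interior region of f̃, and D̃ = closure of Ũ. Then p restricted to D̃ is injective. -/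
/-- The 2-torus `ℝ²/ℤ²`. -/
abbrev Torus2 : Type := AddCircle (1 : ℝ) × AddCircle (1 : ℝ)

/-- The covering projection `ℝ² → ℝ²/ℤ²`. -/
noncomputable def torusProj (x : ℝ × ℝ) : Torus2 :=
  ((x.1 : AddCircle (1 : ℝ)), (x.2 : AddCircle (1 : ℝ)))

/-!
Two points of `closure U` with the same image in the torus differ by a nonzero lattice vector `v`,
and `closure U ⊆ U ∪ γ` for the lifted curve `γ`. As `f` is simple, `γ` misses `v + γ`.
If a connected set `S` with `frontier U ⊆ closure S` had a translate `v + S` avoiding `γ` and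
meeting `U`, then `v + S ⊆ U`, hence `v + frontier U ⊆ closure U`; but a maximizer on the compact
set `closure U` of a functional `g` with `g v > 0` lies on `frontier U` and is pushed out of
`closure U` by `v`. Taking `S = γ` and then `S = U` shows that `closure U` misses `v + closure U`.
-/

open Set Pointwise

theorem IsOpen.frontier_connectedComponentIn_subset {X : Type*} [TopologicalSpace X]
    [LocallyConnectedSpace X] {F : Set X} (hF : IsOpen F) (x : X) :
    frontier (connectedComponentIn F x) ⊆ Fᶜ := by
  rintro z hz hzF
  rw [hF.connectedComponentIn.frontier_eq] at hz
  obtain ⟨w, hwz, hwx⟩ := mem_closure_iff.mp hz.1 _ hF.connectedComponentIn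
    (mem_connectedComponentIn hzF)
  exact hz.2 (connectedComponentIn_eq hwx ▸ connectedComponentIn_eq hwz ▸
    mem_connectedComponentIn hzF)

section NormedSpace

variable {E : Type*} [NormedAddCommGroup E] [NormedSpace ℝ E] [ProperSpace E]

theorem Bornology.IsBounded.exists_mem_frontier_vadd_notMem_closure {s : Set E}
    (hs : Bornology.IsBounded s) (hne : s.Nonempty) {v : E} (hv : v ≠ 0) :
    ∃ z ∈ frontier s, v +ᵥ z ∉ closure s := by
  obtain ⟨g, -, hgv⟩ := exists_dual_vector ℝ v (norm_ne_zero_iff.mpr hv)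
  obtain ⟨z, hz, hmax⟩ :=
    hs.isCompact_closure.exists_isMaxOn hne.closure g.continuous.continuousOn
  have hgv_pos : 0 < g v := by rw [hgv]; exact_mod_cast norm_pos_iff.mpr hv
  refine ⟨z, closure_sdiff_interior s ▸ ⟨hz, fun hzi => ?_⟩, fun hvz => ?_⟩
  · have hloc : IsLocalMax g z :=
      (hmax.on_subset interior_subset_closure).isLocalMax (isOpen_interior.mem_nhds hzi)
    have := hloc.hasFDerivAt_eq_zero g.hasFDerivAt
    simp [this] at hgv_pos
  · have : g (v + z) ≤ g z := hmax hvz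
    rw [map_add] at this
    linarith

theorem disjoint_connectedComponentIn_vadd {F S : Set E} {x v : E}
    (hU : Bornology.IsBounded (connectedComponentIn F x)) (hv : v ≠ 0)
    (hS : IsPreconnected S) (hfr : frontier (connectedComponentIn F x) ⊆ closure S)
    (hSF : v +ᵥ S ⊆ F) :
    Disjoint (connectedComponentIn F x) (v +ᵥ S) := by
  refine Set.disjoint_left.2 fun y hyU hyS => ?_
  have hvS : IsPreconnected (v +ᵥ S) := by
    simpa only [image_vadd] using hS.image _ (continuous_const_vadd v).continuousOn
  have hsub : v +ᵥ S ⊆ connectedComponentIn F x :=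
    connectedComponentIn_eq hyU ▸ hvS.subset_connectedComponentIn hyS hSF
  obtain ⟨z, hz, hvz⟩ := hU.exists_mem_frontier_vadd_notMem_closure ⟨y, hyU⟩ hv
  refine hvz (closure_mono hsub ?_)
  rw [closure_vadd]
  exact vadd_mem_vadd_set (hfr hz)

theorem disjoint_closure_connectedComponentIn_compl_vadd {γ : Set E} {x v : E}
    (hγ : IsClosed γ) (hγc : IsPreconnected γ)
    (hU : Bornology.IsBounded (connectedComponentIn γᶜ x)) (hv : v ≠ 0)
    (hγv : Disjoint γ (v +ᵥ γ)) :
    Disjoint (closure (connectedComponentIn γᶜ x)) (v +ᵥ closure (connectedComponentIn γᶜ x)) := by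
  set U := connectedComponentIn γᶜ x
  have hfr : frontier U ⊆ γ := by
    simpa only [compl_compl] using hγ.isOpen_compl.frontier_connectedComponentIn_subset x
  have disjoint_curve : ∀ w : E, w ≠ 0 → Disjoint γ (w +ᵥ γ) → Disjoint U (w +ᵥ γ) :=
    fun w hw h => disjoint_connectedComponentIn_vadd hU hw hγc (hfr.trans subset_closure)
      h.subset_compl_left
  have hUγ : Disjoint U (v +ᵥ γ) := disjoint_curve v hv hγv
  have hγU : Disjoint γ (v +ᵥ U) :=
    (disjoint_vadd_set_left.2 <| disjoint_curve (-v) (neg_ne_zero.2 hv) <|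
      disjoint_vadd_set_left.1 hγv.symm).symm
  have hUU : Disjoint U (v +ᵥ U) := disjoint_connectedComponentIn_vadd hU hv
    isPreconnected_connectedComponentIn frontier_subset_closure hγU.subset_compl_left
  have hcl : closure U ⊆ U ∪ γ :=
    closure_eq_self_union_frontier U ▸ union_subset_union_right U hfr
  refine Disjoint.mono hcl ((vadd_set_mono hcl).trans (vadd_set_union).subset) ?_
  simp only [disjoint_union_left, disjoint_union_right]
  exact ⟨⟨hUU, hγU⟩, hUγ, hγv⟩

end NormedSpace

theorem apply_eq_apply_of_simple_loop {α β : Type*} {f : unitInterval → α} {g : unitInterval → β}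
    (hf : f 0 = f 1) (hsimple : InjOn f (Ico 0 1)) (hg : g 0 = g 1) {s t : unitInterval}
    (h : f s = f t) : g s = g t := by
  have reparam : ∀ u, ∃ u' ∈ Ico (0 : unitInterval) 1, f u' = f u ∧ g u' = g u := by
    intro u
    rcases eq_or_ne u 1 with rfl | hu
    · exact ⟨0, ⟨le_rfl, zero_lt_one⟩, hf, hg⟩
    · exact ⟨u, ⟨unitInterval.nonneg', unitInterval.lt_one_iff_ne_one.2 hu⟩, rfl, rfl⟩
  obtain ⟨s', hs', hfs, hgs⟩ := reparam s
  obtain ⟨t', ht', hft, hgt⟩ := reparam t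
  rw [← hgs, ← hgt, hsimple hs' ht' (by rw [hfs, hft, h])]

theorem torusProj_add (x y : ℝ × ℝ) : torusProj (x + y) = torusProj x + torusProj y :=
  Prod.ext (AddCircle.coe_add _ _ _) (AddCircle.coe_add _ _ _)

theorem disjoint_range_vadd_of_isLift {f : unitInterval → Torus2} {ftil : unitInterval → ℝ × ℝ}
    (hloop : f 0 = f 1) (hsimple : InjOn f (Ico 0 1)) (hlift : ∀ t, torusProj (ftil t) = f t)
    (hftil_loop : ftil 0 = ftil 1) {v : ℝ × ℝ} (hv0 : torusProj v = 0) (hv : v ≠ 0) :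
    Disjoint (range ftil) (v +ᵥ range ftil) := by
  rw [disjoint_left]
  rintro _ ⟨s, rfl⟩ ⟨_, ⟨t, rfl⟩, hts : v + ftil t = ftil s⟩
  have hf : f t = f s := by
    rw [← hlift, ← hlift, ← hts, torusProj_add, hv0, zero_add]
  rw [← apply_eq_apply_of_simple_loop hloop hsimple hftil_loop hf,
    add_eq_right] at hts
  exact hv hts

theorem proj_injective_on_jordan_region_general
    (f : C(unitInterval, Torus2)) (hloop : f 0 = f 1)
    (hsimple : Set.InjOn f (Set.Ico (0 : unitInterval) 1))
    (ftil : C(unitInterval, ℝ × ℝ)) (hlift : ∀ t, torusProj (ftil t) = f t)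
    (hftil_loop : ftil 0 = ftil 1)
    (U : Set (ℝ × ℝ)) (hU : ∃ x ∈ (Set.range ftil)ᶜ, U = connectedComponentIn (Set.range ftil)ᶜ x)
    (hUbdd : Bornology.IsBounded U) :
    Set.InjOn torusProj (closure U) := by
  obtain ⟨x₀, -, rfl⟩ := hU
  intro x hx y hy hxy
  by_contra hne
  have hv : y - x ≠ 0 := sub_ne_zero.2 (Ne.symm hne)
  have hv0 : torusProj (y - x) = 0 := by
    rw [← add_left_inj (torusProj x), ← torusProj_add, sub_add_cancel, zero_add, hxy]
  have hγ := disjoint_range_vadd_of_isLift hloop hsimple hlift hftil_loop hv0 hv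
  refine (disjoint_closure_connectedComponentIn_compl_vadd
    (isCompact_range ftil.continuous).isClosed (isPreconnected_range ftil.continuous) hUbdd hv
    hγ).ne_of_mem hy (vadd_mem_vadd_set hx) ?_
  rw [vadd_eq_add, sub_add_cancel]

theorem proj_injective_on_jordan_region
    (f : C(unitInterval, Torus2)) (hloop : f 0 = f 1)
    (hsimple : Set.InjOn f (Set.Ico (0 : unitInterval) 1))
    (hnull : ContinuousMap.HomotopicRel f (ContinuousMap.const _ (f 0)) {0, 1})
    (ftil : C(unitInterval, ℝ × ℝ)) (hlift : ∀ t, torusProj (ftil t) = f t)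
    (hftil_loop : ftil 0 = ftil 1)
    (hftil_simple : Set.InjOn ftil (Set.Ico (0 : unitInterval) 1))
    (U : Set (ℝ × ℝ)) (hU : ∃ x ∈ (Set.range ftil)ᶜ, U = connectedComponentIn (Set.range ftil)ᶜ x)
    (hUbdd : Bornology.IsBounded U) :
    Set.InjOn torusProj (closure U) :=
  proj_injective_on_jordan_region_general f hloop hsimple ftil hlift hftil_loop U hU hUbdd
end

section
/- Let f̃ : [0,1] → ℝ² be a simple closed curve with Jordan interior Ũ and D̃ = closure(Ũ), and let a ∈ ℤ² \ {0} be such that the translates Im(f̃) and Im(f̃) + a are disjoint. Then D̃ ∩ (D̃ + a) = ∅. -/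
/-!
Write `C` for the curve, `C' = C + a`, `U' = U + a` and `D' = D + a`. Since `C` and `C'` are
disjoint and connected, `C` either lies in the component `U'` of `C'ᶜ` or misses it, and likewise
`C'` relative to `U`. If `C'` misses `U`, then `D ⊆ U ∪ C` is a connected subset of `C'ᶜ`, so it
lies in `U'` or misses it; but `D ⊆ U' ⊆ D'` is impossible for a bounded nonempty set and `a ≠ 0`,
so `D` misses `U' ∪ C' ⊇ D'`. The case where `C` misses `U'` is symmetric. Finally `C ⊆ U'` and
`C' ⊆ U` cannot hold together: then `U ∪ U'` would be the whole plane. Indeed, the component `W`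
of a point `w ∉ U ∪ U'` in `Cᶜ` misses `U ⊇ C'`, so it lies in the component of `w` in `C'ᶜ`,
which misses the open set `U'`; yet the frontier of `W` meets `C ⊆ U'`.
-/

open Set Bornology

section Components

variable {X : Type*} [TopologicalSpace X]

theorem IsPreconnected.subset_or_disjoint_connectedComponentIn {s F : Set X}
    (hs : IsPreconnected s) (hsF : s ⊆ F) (x : X) :
    s ⊆ _root_.connectedComponentIn F x ∨ Disjoint s (_root_.connectedComponentIn F x) := by
  refine or_iff_not_imp_right.2 fun hmeet => ?_
  obtain ⟨y, hys, hyx⟩ := not_disjoint_iff.1 hmeet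
  rw [connectedComponentIn_eq hyx]
  exact hs.subset_connectedComponentIn hys hsF

theorem disjoint_connectedComponentIn_of_notMem {F : Set X} {w x : X}
    (hw : w ∉ connectedComponentIn F x) :
    Disjoint (connectedComponentIn F w) (connectedComponentIn F x) := by
  refine disjoint_left.2 fun z hzw hzx => hw ?_
  have hwF : w ∈ F := connectedComponentIn_nonempty_iff.1 ⟨z, hzw⟩
  rw [connectedComponentIn_eq hzx, ← connectedComponentIn_eq hzw]
  exact mem_connectedComponentIn hwF

variable [LocallyConnectedSpace X] {K L : Set X}

theorem closure_connectedComponentIn_compl_subset (hK : IsClosed K) (x : X) :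
    closure (connectedComponentIn Kᶜ x) ⊆ connectedComponentIn Kᶜ x ∪ K := by
  intro z hz
  refine or_iff_not_imp_right.2 fun hzK => ?_
  have hnhds : connectedComponentIn Kᶜ z ∈ nhds z :=
    hK.isOpen_compl.connectedComponentIn.mem_nhds (mem_connectedComponentIn hzK)
  obtain ⟨y, hyz, hyx⟩ := mem_closure_iff_nhds.1 hz _ hnhds
  rw [connectedComponentIn_eq hyx, ← connectedComponentIn_eq hyz]
  exact mem_connectedComponentIn hzK

theorem disjoint_closure_connectedComponentIn_compl (hK : IsClosed K) (hL : IsClosed L)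
    (hKL : Disjoint K L) {x y : X} (hLU : Disjoint L (connectedComponentIn Kᶜ x))
    (hUV : ¬ closure (connectedComponentIn Kᶜ x) ⊆ connectedComponentIn Lᶜ y) :
    Disjoint (closure (connectedComponentIn Kᶜ x)) (closure (connectedComponentIn Lᶜ y)) := by
  have hUK := closure_connectedComponentIn_compl_subset hK x
  have hUL : Disjoint (closure (connectedComponentIn Kᶜ x)) L :=
    (disjoint_union_left.2 ⟨hLU.symm, hKL⟩).mono_left hUK
  have hUV' := (isPreconnected_connectedComponentIn.closure.subset_or_disjoint_connectedComponentIn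
    (subset_compl_iff_disjoint_right.2 hUL) y).resolve_left hUV
  exact (disjoint_union_right.2 ⟨hUV', hUL⟩).mono_right
    (closure_connectedComponentIn_compl_subset hL y)

theorem connectedComponentIn_compl_union_eq_univ_of_subset [ConnectedSpace X] (hK : IsClosed K)
    (hL : IsClosed L) (hKne : K.Nonempty) {x y : X}
    (hKV : K ⊆ connectedComponentIn Lᶜ y) (hLU : L ⊆ connectedComponentIn Kᶜ x) :
    connectedComponentIn Kᶜ x ∪ connectedComponentIn Lᶜ y = univ := by
  refine eq_univ_of_forall fun w => or_iff_not_imp_left.2 fun hwU => ?_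
  by_contra hwV
  set W := connectedComponentIn Kᶜ w
  have hwK : w ∈ Kᶜ := fun hw => hwV (hKV hw)
  have hWL : W ⊆ Lᶜ := fun z hzW hzL =>
    disjoint_left.1 (disjoint_connectedComponentIn_of_notMem hwU) hzW (hLU hzL)
  have hWW' : W ⊆ connectedComponentIn Lᶜ w :=
    isPreconnected_connectedComponentIn.subset_connectedComponentIn
      (mem_connectedComponentIn hwK) hWL
  have hWopen : IsOpen W := hK.isOpen_compl.connectedComponentIn
  obtain ⟨c, hcW, hcnW⟩ : (frontier W).Nonempty := by
    refine nonempty_frontier_iff.2 ⟨⟨w, mem_connectedComponentIn hwK⟩, fun hWuniv => ?_⟩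
    obtain ⟨k, hk⟩ := hKne
    exact connectedComponentIn_subset Kᶜ w (hWuniv.symm ▸ mem_univ k : k ∈ W) hk
  rw [hWopen.interior_eq] at hcnW
  have hcK : c ∈ K := (closure_connectedComponentIn_compl_subset hK w hcW).resolve_left hcnW
  exact (disjoint_connectedComponentIn_of_notMem hwV).closure_left
    hL.isOpen_compl.connectedComponentIn |>.ne_of_mem (closure_mono hWW' hcW) (hKV hcK) rfl

theorem disjoint_closure_connectedComponentIn_compl_of_not_nested [ConnectedSpace X]
    (hK : IsClosed K) (hL : IsClosed L) (hKc : IsConnected K) (hLc : IsPreconnected L)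
    (hKL : Disjoint K L) {x y : X}
    (hcover : connectedComponentIn Kᶜ x ∪ connectedComponentIn Lᶜ y ≠ univ)
    (hUV : ¬ closure (connectedComponentIn Kᶜ x) ⊆ closure (connectedComponentIn Lᶜ y))
    (hVU : ¬ closure (connectedComponentIn Lᶜ y) ⊆ closure (connectedComponentIn Kᶜ x)) :
    Disjoint (closure (connectedComponentIn Kᶜ x)) (closure (connectedComponentIn Lᶜ y)) := by
  rcases hLc.subset_or_disjoint_connectedComponentIn (subset_compl_iff_disjoint_left.2 hKL) x
    with hLU | hLU
  · rcases hKc.isPreconnected.subset_or_disjoint_connectedComponentIn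
      (subset_compl_iff_disjoint_right.2 hKL) y with hKV | hKV
    · exact (hcover
        (connectedComponentIn_compl_union_eq_univ_of_subset hK hL hKc.nonempty hKV hLU)).elim
    · exact (disjoint_closure_connectedComponentIn_compl hL hK hKL.symm hKV
        fun h => hVU (h.trans subset_closure)).symm
  · exact disjoint_closure_connectedComponentIn_compl hK hL hKL hLU
      fun h => hUV (h.trans subset_closure)

end Components

section Translates

variable {E : Type*} [NormedAddCommGroup E] [NormedSpace ℝ E]

theorem Bornology.IsBounded.not_image_add_right_subset {D : Set E} (hD : IsBounded D)
    (hne : D.Nonempty) {a : E} (ha : a ≠ 0) : ¬ (fun x => x + a) '' D ⊆ D := by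
  intro hsub
  obtain ⟨x, hx⟩ := hne
  have hmem : ∀ n : ℕ, x + n • a ∈ D := by
    intro n
    induction n with
    | zero => simpa using hx
    | succ n ih => simpa [succ_nsmul, add_assoc] using hsub ⟨_, ih, rfl⟩
  obtain ⟨n, hn⟩ := exists_nat_gt (Metric.diam D / ‖a‖)
  have hdist : n * ‖a‖ ≤ Metric.diam D := by
    simpa [dist_eq_norm, RCLike.norm_nsmul ℝ] using Metric.dist_le_diam_of_mem hD (hmem n) hx
  rw [div_lt_iff₀ (norm_pos_iff.2 ha)] at hn
  linarith

theorem Bornology.IsBounded.not_subset_image_add_right {D : Set E} (hD : IsBounded D)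
    (hne : D.Nonempty) {a : E} (ha : a ≠ 0) : ¬ D ⊆ (fun x => x + a) '' D := by
  rw [image_add_right, ← image_subset_iff]
  exact hD.not_image_add_right_subset hne (neg_ne_zero.2 ha)

theorem disjoint_closure_connectedComponentIn_compl_image_add_right {C : Set E}
    (hC : IsClosed C) (hCc : IsConnected C) {a : E} (ha : a ≠ 0)
    (hCa : Disjoint C ((fun x => x + a) '' C)) {x : E} (hx : x ∈ Cᶜ)
    (hU : IsBounded (connectedComponentIn Cᶜ x)) :
    Disjoint (closure (connectedComponentIn Cᶜ x))
      ((fun x => x + a) '' closure (connectedComponentIn Cᶜ x)) := by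
  have : Nontrivial E := ⟨⟨a, 0, ha⟩⟩
  set τ := Homeomorph.addRight a
  have hτU : τ '' connectedComponentIn Cᶜ x = connectedComponentIn (τ '' C)ᶜ (τ x) := by
    rw [τ.image_connectedComponentIn hx, image_compl_eq τ.bijective]
  have hcover : connectedComponentIn Cᶜ x ∪ τ '' connectedComponentIn Cᶜ x ≠ univ := by
    refine fun huniv => NormedSpace.unbounded_univ ℝ E ?_
    rw [← huniv]
    exact hU.union ((IsometryEquiv.addRight a).isometry.lipschitz.isBounded_image hU)
  have hτD : τ '' closure (connectedComponentIn Cᶜ x) =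
      closure (connectedComponentIn (τ '' C)ᶜ (τ x)) := by
    rw [τ.image_closure, hτU]
  have hDne : (closure (connectedComponentIn Cᶜ x)).Nonempty :=
    ⟨x, subset_closure (mem_connectedComponentIn hx)⟩
  change Disjoint _ (τ '' _)
  rw [hτU] at hcover
  rw [hτD]
  refine disjoint_closure_connectedComponentIn_compl_of_not_nested hC (τ.isClosedMap _ hC) hCc
    (hCc.image τ τ.continuous.continuousOn).isPreconnected hCa hcover ?_ ?_
  · rw [← hτD]
    exact hU.closure.not_subset_image_add_right hDne ha
  · rw [← hτD]
    exact hU.closure.not_image_add_right_subset hDne ha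

end Translates

theorem jordan_regions_of_disjoint_translates_disjoint_general
    (ftil : C(unitInterval, ℝ × ℝ))
    (U : Set (ℝ × ℝ))
    (hU : ∃ x ∈ (Set.range ftil)ᶜ, U = connectedComponentIn (Set.range ftil)ᶜ x)
    (hUbdd : Bornology.IsBounded U)
    (D : Set (ℝ × ℝ)) (hD : D = closure U)
    (m : ℤ × ℤ) (hm : m ≠ 0) (a : ℝ × ℝ) (ha : a = ((m.1 : ℝ), (m.2 : ℝ)))
    (hdisj : Set.range ftil ∩ ((fun x => x + a) '' Set.range ftil) = ∅) :
    D ∩ ((fun x => x + a) '' D) = ∅ := by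
  obtain ⟨x, hx, rfl⟩ := hU
  have ha0 : a ≠ 0 := by
    rintro rfl
    simp only [Prod.ext_iff, Prod.fst_zero, Prod.snd_zero] at ha
    exact hm (Prod.ext (by exact_mod_cast ha.1.symm) (by exact_mod_cast ha.2.symm))
  rw [hD, ← disjoint_iff_inter_eq_empty]
  exact disjoint_closure_connectedComponentIn_compl_image_add_right
    (isCompact_range ftil.continuous).isClosed
    (isConnected_range ftil.continuous) ha0 (disjoint_iff_inter_eq_empty.2 hdisj) hx hUbdd

theorem jordan_regions_of_disjoint_translates_disjoint
    (ftil : C(unitInterval, ℝ × ℝ)) (hloop : ftil 0 = ftil 1)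
    (hsimple : Set.InjOn ftil (Set.Ico (0 : unitInterval) 1))
    (U : Set (ℝ × ℝ))
    (hU : ∃ x ∈ (Set.range ftil)ᶜ, U = connectedComponentIn (Set.range ftil)ᶜ x)
    (hUbdd : Bornology.IsBounded U)
    (D : Set (ℝ × ℝ)) (hD : D = closure U)
    (m : ℤ × ℤ) (hm : m ≠ 0) (a : ℝ × ℝ) (ha : a = ((m.1 : ℝ), (m.2 : ℝ)))
    (hdisj : Set.range ftil ∩ ((fun x => x + a) '' Set.range ftil) = ∅) :
    D ∩ ((fun x => x + a) '' D) = ∅ :=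
  jordan_regions_of_disjoint_translates_disjoint_general ftil U hU hUbdd D hD m hm a ha hdisj
end

section
/- A finite symmetric set A ⊆ ℤ containing 0 generates ℤ if and only if there exists a compact set K ⊆ ℝ with K + ℤ = ℝ and A = (K − K) ∩ ℤ. -/
/-!
If `K + ℤ = ℝ` and the subgroup `H` generated by `(K − K) ∩ ℤ` were proper, then `K + H` and
`K + (ℤ \ H)` would be disjoint closed sets covering `ℝ`, contradicting connectedness.

Conversely, write `−1 = a₀ + ⋯ + aₙ₋₁` with entries in `A` such that every element of `A` occurs,
let `wᵢ = a₀ + ⋯ + aᵢ₋₁` and take the staircase `K = ⋃ᵢ (wᵢ + [i/n, (i+1)/n])`. Modulo `ℤ` its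
steps cover the circle, and two of its points differ by an integer only if they lie on the same
or on adjacent steps, the last step being adjacent to the first because `wₙ + 1 = w₀`. The integer
differences are therefore `0` and the `±aᵢ`, i.e. exactly `A`.
-/

open Pointwise Set

theorem exists_list_sum_eq_and_mem_iff {G : Type*} [AddCommGroup G] {A : Set G}
    (hfin : A.Finite) (hsym : -A = A) {x : G} (hx : x ∈ AddSubgroup.closure A) :
    ∃ L : List G, L.sum = x ∧ ∀ a, a ∈ L ↔ a ∈ A := by
  have hx' : x ∈ AddSubmonoid.closure A := by
    rwa [← Set.union_self A, ← congrArg (A ∪ ·) hsym, ← AddSubgroup.closure_toAddSubmonoid]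
  obtain ⟨l, hlA, hlx⟩ := AddSubmonoid.exists_list_of_mem_closure hx'
  -- pad `l` with every element of `A` and its negative, which does not change the sum
  set l₀ := hfin.toFinset.toList
  refine ⟨l₀ ++ l₀.map (-·) ++ l, ?_, fun a => ?_⟩
  · rw [List.sum_append, List.sum_append, ← List.sum_neg, add_neg_cancel, zero_add, hlx]
  · simp only [List.mem_append, List.mem_map, l₀, Finset.mem_toList, Set.Finite.mem_toFinset,
      neg_eq_iff_eq_neg]
    constructor
    · rintro ((h | ⟨b, hb, rfl⟩) | h)
      exacts [h, hsym ▸ Set.mem_neg.2 hb, hlA a h]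
    · exact fun h => Or.inl (Or.inl h)

theorem AddSubgroup.eq_top_of_forall_intCast_mem_sub (H : AddSubgroup ℤ) {K : Set ℝ}
    (hK : IsCompact K) (hcov : ∀ x : ℝ, ∃ y ∈ K, ∃ m : ℤ, x - y = m)
    (hH : ∀ m : ℤ, (m : ℝ) ∈ K - K → m ∈ H) : H = ⊤ := by
  have hclosed (S : Set ℤ) : IsClosed (K + ((↑) : ℤ → ℝ) '' S) :=
    (Int.isClosedEmbedding_coe_real.isClosedMap S (isClosed_discrete S)).add_left_of_isCompact hK
  set C := K + ((↑) : ℤ → ℝ) '' H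
  set D := K + ((↑) : ℤ → ℝ) '' (H : Set ℤ)ᶜ
  have hunion : C ∪ D = univ := by
    refine eq_univ_of_forall fun x => ?_
    obtain ⟨y, hy, m, hm⟩ := hcov x
    have hx : y + m = x := by linarith
    by_cases h : m ∈ H
    · exact Or.inl ⟨y, hy, m, mem_image_of_mem _ h, hx⟩
    · exact Or.inr ⟨y, hy, m, mem_image_of_mem _ h, hx⟩
  have hdisj : Disjoint C D := by
    refine Set.disjoint_left.2 ?_
    rintro _ ⟨k, hk, _, ⟨h, hh, rfl⟩, rfl⟩ ⟨k', hk', _, ⟨h', hh', rfl⟩, he⟩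
    have hdiff : ((h' - h : ℤ) : ℝ) ∈ K - K := by
      rw [Int.cast_sub, show (h' : ℝ) - h = k - k' by linarith]
      exact sub_mem_sub hk hk'
    exact hh' (by simpa using H.add_mem (hH _ hdiff) hh)
  have hC : C = Dᶜ := (IsCompl.of_le hdisj.le_bot hunion.ge).eq_compl
  obtain ⟨y, hy, -⟩ := hcov 0
  have hCuniv : C = univ :=
    IsClopen.eq_univ ⟨hclosed _, hC ▸ (hclosed _).isOpen_compl⟩
      ⟨y + (0 : ℤ), add_mem_add hy (mem_image_of_mem _ H.zero_mem)⟩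
  refine (AddSubgroup.eq_top_iff' H).2 fun m => by_contra fun hm => ?_
  exact hdisj.notMem_of_mem_left (hCuniv ▸ mem_univ _) (add_mem_add hy (mem_image_of_mem _ hm))

namespace Nathanson

section Arc

variable {n i j : ℕ}

def arc (n i : ℕ) : Set ℝ := Icc ((i : ℝ) / n) ((i + 1 : ℝ) / n)

theorem left_mem_arc : (i : ℝ) / n ∈ arc n i :=
  left_mem_Icc.2 (by gcongr; linarith)

theorem right_mem_arc : (i + 1 : ℝ) / n ∈ arc n i :=
  right_mem_Icc.2 (by gcongr; linarith)

theorem arc_subset_Icc (hi : i < n) : arc n i ⊆ Icc 0 1 := by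
  have hn : (0 : ℝ) < n := by exact_mod_cast (i.zero_le.trans_lt hi)
  refine Icc_subset_Icc (by positivity) ((div_le_one hn).2 ?_)
  exact_mod_cast hi

theorem exists_mem_arc (hn : 0 < n) {f : ℝ} (hf : f ∈ Ico 0 1) : ∃ i < n, f ∈ arc n i := by
  have hn' : (0 : ℝ) < n := by exact_mod_cast hn
  have hfn : 0 ≤ f * n := mul_nonneg hf.1 hn'.le
  refine ⟨⌊f * n⌋₊, ?_, ?_, ?_⟩
  · exact (Nat.floor_lt hfn).2 (by nlinarith [hf.2])
  · exact (div_le_iff₀ hn').2 (Nat.floor_le hfn)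
  · exact (le_div_iff₀ hn').2 (Nat.lt_floor_add_one _).le

theorem le_succ_of_mem_arc (hn : 0 < n) {s t : ℝ} (hs : s ∈ arc n i) (ht : t ∈ arc n j)
    (hst : s ≤ t) : i ≤ j + 1 := by
  have hn' : (0 : ℝ) < n := by exact_mod_cast hn
  have : (i : ℝ) / n ≤ (j + 1 : ℝ) / n := hs.1.trans (hst.trans ht.2)
  exact_mod_cast (div_le_div_iff_of_pos_right hn').1 this

theorem eq_zero_of_zero_mem_arc (hn : 0 < n) (h : 0 ∈ arc n i) : i = 0 := by
  have hn' : (0 : ℝ) < n := by exact_mod_cast hn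
  have : (i : ℝ) ≤ 0 := by simpa using (div_le_iff₀ hn').1 h.1
  exact_mod_cast this.antisymm i.cast_nonneg

theorem add_one_eq_of_one_mem_arc (hi : i < n) (h : 1 ∈ arc n i) : i + 1 = n := by
  have hn' : (0 : ℝ) < n := by exact_mod_cast (i.zero_le.trans_lt hi)
  have : (n : ℝ) ≤ i + 1 := by simpa using (le_div_iff₀ hn').1 h.2
  have : n ≤ i + 1 := by exact_mod_cast this
  omega

end Arc

section Staircase

variable (L : List ℤ)

def walk (i : ℕ) : ℤ := (L.take i).sum

def staircase : Set ℝ := ⋃ i < L.length, (walk L i : ℝ) +ᵥ arc L.length i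

variable {L}

@[simp] theorem walk_zero : walk L 0 = 0 := by simp [walk]

@[simp] theorem walk_length : walk L L.length = L.sum := by simp [walk]

theorem walk_succ {i : ℕ} (hi : i < L.length) : walk L (i + 1) = walk L i + L[i] :=
  List.sum_take_succ L i hi

theorem add_mem_staircase {i : ℕ} (hi : i < L.length) {s : ℝ} (hs : s ∈ arc L.length i) :
    walk L i + s ∈ staircase L :=
  mem_biUnion hi (vadd_mem_vadd_set hs)

theorem mem_staircase {x : ℝ} :
    x ∈ staircase L ↔ ∃ i < L.length, ∃ s ∈ arc L.length i, walk L i + s = x := by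
  simp [staircase, mem_vadd_set]

theorem isCompact_staircase (L : List ℤ) : IsCompact (staircase L) :=
  (finite_lt_nat _).isCompact_biUnion fun _ _ => isCompact_Icc.vadd _

theorem exists_mem_staircase_sub_eq_intCast (hL : L ≠ []) (x : ℝ) :
    ∃ y ∈ staircase L, ∃ m : ℤ, x - y = m := by
  obtain ⟨i, hi, hf⟩ :=
    exists_mem_arc (List.length_pos_iff.2 hL) ⟨Int.fract_nonneg x, Int.fract_lt_one x⟩
  refine ⟨walk L i + Int.fract x, add_mem_staircase hi hf, ⌊x⌋ - walk L i, ?_⟩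
  rw [Int.cast_sub, ← Int.self_sub_fract]
  ring

theorem eq_zero_or_mem_of_intCast_eq (hL : L.sum = -1) {i j : ℕ} (hi : i < L.length)
    (hj : j < L.length) {s t : ℝ} (hs : s ∈ arc L.length i) (ht : t ∈ arc L.length j)
    (hts : t ≤ s) {m : ℤ} (hm : (m : ℝ) = walk L i + s - (walk L j + t)) :
    m = 0 ∨ m ∈ L ∨ -m ∈ L := by
  have hn : 0 < L.length := by omega
  set d : ℤ := m - walk L i + walk L j with hd
  have hdst : (d : ℝ) = s - t := by push_cast [hd]; linarith
  have hs1 : s ≤ 1 := (arc_subset_Icc hi hs).2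
  have ht0 : 0 ≤ t := (arc_subset_Icc hj ht).1
  have hd_nonneg : 0 ≤ d := by exact_mod_cast (show (0 : ℝ) ≤ d by linarith)
  have hd_le : d ≤ 1 := by exact_mod_cast (show (d : ℝ) ≤ 1 by linarith)
  obtain hd0 | hd1 : d = 0 ∨ d = 1 := by omega
  · have hst : s = t := by rw [hd0, Int.cast_zero] at hdst; linarith
    have hij := le_succ_of_mem_arc hn hs ht hst.le
    have hji := le_succ_of_mem_arc hn ht hs hst.ge
    obtain rfl | rfl | rfl : i = j ∨ i = j + 1 ∨ j = i + 1 := by omega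
    · left; omega
    · have := walk_succ hj
      right; left; rw [show m = L[j] by omega]; exact List.getElem_mem _
    · have := walk_succ hi
      right; right; rw [show -m = L[i] by omega]; exact List.getElem_mem _
  · -- the step across the seam from the last arc back to the first one
    obtain rfl : s = 1 := by rw [hd1, Int.cast_one] at hdst; linarith
    obtain rfl : t = 0 := by rw [hd1, Int.cast_one] at hdst; linarith
    obtain rfl := eq_zero_of_zero_mem_arc hn ht
    have hlast := add_one_eq_of_one_mem_arc hi hs
    have := walk_succ hi
    rw [hlast, walk_length, hL] at this
    right; right; rw [show -m = L[i] by simp only [walk_zero] at hd; omega]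
    exact List.getElem_mem _

theorem getElem_mem_staircase_sub (hL : L.sum = -1) {i : ℕ} (hi : i < L.length) :
    (L[i] : ℝ) ∈ staircase L - staircase L := by
  have hstep := walk_succ hi
  by_cases hlast : i + 1 < L.length
  · refine ⟨_, add_mem_staircase hlast left_mem_arc, _, add_mem_staircase hi right_mem_arc, ?_⟩
    rw [hstep]; push_cast; ring
  · have hn : i + 1 = L.length := by omega
    refine ⟨_, add_mem_staircase (i := 0) (by omega) left_mem_arc, _,
      add_mem_staircase hi right_mem_arc, ?_⟩
    rw [hn, walk_length, hL] at hstep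
    have : (i + 1 : ℝ) / L.length = 1 := by
      rw [← hn]; push_cast; exact div_self (by positivity)
    rw [this, walk_zero, show L[i] = -1 - walk L i by omega]
    push_cast; ring

theorem intCast_mem_staircase_sub_iff (hL : L.sum = -1) {m : ℤ} :
    (m : ℝ) ∈ staircase L - staircase L ↔ m = 0 ∨ m ∈ L ∨ -m ∈ L := by
  constructor
  · rintro ⟨_, hu, _, hv, huv⟩
    obtain ⟨i, hi, s, hs, rfl⟩ := mem_staircase.1 hu
    obtain ⟨j, hj, t, ht, rfl⟩ := mem_staircase.1 hv
    rcases le_total t s with hts | hst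
    · exact eq_zero_or_mem_of_intCast_eq hL hi hj hs ht hts huv.symm
    · have := eq_zero_or_mem_of_intCast_eq hL hj hi ht hs hst (m := -m) (by push_cast; linarith)
      rw [neg_neg, neg_eq_zero] at this
      tauto
  · have hne : L ≠ [] := by rintro rfl; simp at hL
    rintro (rfl | hm | hm)
    · obtain ⟨y, hy, -⟩ := exists_mem_staircase_sub_eq_intCast hne 0
      exact ⟨y, hy, y, hy, by simp⟩
    · obtain ⟨i, hi, rfl⟩ := List.mem_iff_getElem.1 hm
      exact getElem_mem_staircase_sub hL hi
    · obtain ⟨i, hi, hmi⟩ := List.mem_iff_getElem.1 hm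
      obtain ⟨u, hu, v, hv, huv⟩ := getElem_mem_staircase_sub hL hi
      exact ⟨v, hv, u, hu, by rw [hmi] at huv; push_cast at huv ⊢; linarith⟩

end Staircase

end Nathanson

open Nathanson in
theorem nathanson_one_dimensional (A : Set ℤ) (hfin : A.Finite) (hsym : -A = A)
    (h0 : (0 : ℤ) ∈ A) :
    AddSubgroup.closure A = ⊤ ↔
      ∃ K : Set ℝ, IsCompact K ∧ (∀ x : ℝ, ∃ y ∈ K, ∃ m : ℤ, x - y = (m : ℝ)) ∧
        ∀ m : ℤ, m ∈ A ↔ (m : ℝ) ∈ K - K := by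
  constructor
  · intro htop
    obtain ⟨L, hsum, hLA⟩ :=
      exists_list_sum_eq_and_mem_iff hfin hsym (htop ▸ AddSubgroup.mem_top (-1 : ℤ))
    have hne : L ≠ [] := by rintro rfl; simp at hsum
    refine ⟨staircase L, isCompact_staircase L, exists_mem_staircase_sub_eq_intCast hne,
      fun m => ?_⟩
    rw [intCast_mem_staircase_sub_iff hsum, hLA, hLA, ← Set.mem_neg, hsym]
    exact ⟨fun h => Or.inr (Or.inl h), by rintro (rfl | h | h) <;> assumption⟩
  · rintro ⟨K, hK, hcov, hA⟩
    exact (AddSubgroup.closure A).eq_top_of_forall_intCast_mem_sub hK hcov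
      fun m hm => AddSubgroup.subset_closure ((hA m).2 hm)
end

section
/- For every n ≥ 2, there exists a finite symmetric subset A of ℤⁿ containing 0 and generating ℤⁿ such that A ≠ (K − K) ∩ ℤⁿ for every compact K ⊆ ℝⁿ with K + ℤⁿ = ℝⁿ. -/
/-!
Take `A = {0, ±e₁, ±e₂} × {-1, 0, 1}ⁿ⁻²`. If `A = (K - K) ∩ ℤⁿ`, then, `K - K` being compact, every
lattice point close enough to `K - K` lies in it; so writing each `x = y + z` with `y ∈ K`,
`z ∈ ℤⁿ` gives a rounding `x ↦ z` at bounded distance from the identity whose values at nearby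
points differ by an element of `A`. On a fine square grid in the plane of the first two
coordinates, its projection to `ℤ²` moves king-adjacent points by `0` or a unit vector and sends
the left, right, bottom and top sides of the grid into `x ≤ 0`, `x ≥ 1`, `y ≤ 0`, `y ≥ 1`. Then
every grid cell goes to a degenerate loop, so the sum of any antisymmetric edge function around
the boundary of the grid vanishes; but for the signed count of crossings with a ray out of
`(1/2, 1/2)` this sum is `1`.
-/

open Pointwise

open Finset Metric

def unitSteps : Set (ℤ × ℤ) := {0, (1, 0), (-1, 0), (0, 1), (0, -1)}

lemma mem_unitSteps {u : ℤ × ℤ} : u ∈ unitSteps ↔ u.1 = 0 ∧ u.2 = 0 ∨ u.1 = 1 ∧ u.2 = 0 ∨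
    u.1 = -1 ∧ u.2 = 0 ∨ u.1 = 0 ∧ u.2 = 1 ∨ u.1 = 0 ∧ u.2 = -1 := by
  obtain ⟨u₁, u₂⟩ := u
  simp [unitSteps]

lemma eq_or_eq_of_sub_mem_unitSteps {a b d : ℤ × ℤ} (hab : b - a ∈ unitSteps)
    (hbd : d - b ∈ unitSteps) (had : d - a ∈ unitSteps) (hne : a ≠ d) : b = a ∨ b = d := by
  obtain ⟨a₁, a₂⟩ := a; obtain ⟨b₁, b₂⟩ := b; obtain ⟨d₁, d₂⟩ := d
  simp only [mem_unitSteps, Prod.mk_sub_mk] at hab hbd had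
  simp only [ne_eq, Prod.mk.injEq] at hne ⊢
  omega

/-- Sides and diagonal `a d` being unit steps force the square to degenerate: `a = d`, or
`b, e ∈ {a, d}`. -/
lemma add_eq_add_of_sub_mem_unitSteps (ω : ℤ × ℤ → ℤ × ℤ → ℤ) (hω : ∀ x y, ω y x = -ω x y)
    {a b d e : ℤ × ℤ} (hab : b - a ∈ unitSteps) (hbd : d - b ∈ unitSteps)
    (hae : e - a ∈ unitSteps) (hed : d - e ∈ unitSteps) (had : d - a ∈ unitSteps) :
    ω a b + ω b d = ω a e + ω e d := by
  have hself : ∀ x, ω x x = 0 := fun x => by linarith [hω x x]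
  by_cases hda : a = d
  · subst hda
    linarith [hω a b, hω a e]
  · rcases eq_or_eq_of_sub_mem_unitSteps hab hbd had hda with rfl | rfl <;>
    rcases eq_or_eq_of_sub_mem_unitSteps hae hed had hda with rfl | rfl <;>
    simp [hself]

/-- Discrete Stokes theorem on `[0, m] × [0, k]`, for a form with values `H i j` on horizontal and
`W i j` on vertical edges that vanishes around every cell. -/
theorem sum_grid_boundary_eq {M : Type*} [AddCommMonoid M] (H W : ℕ → ℕ → M)
    (hcell : ∀ i j, H i j + W (i + 1) j = W i j + H i (j + 1)) (m k : ℕ) :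
    ∑ i ∈ range m, H i 0 + ∑ j ∈ range k, W m j = ∑ j ∈ range k, W 0 j + ∑ i ∈ range m, H i k := by
  have hcolumn : ∀ i, H i 0 + ∑ j ∈ range k, W (i + 1) j = ∑ j ∈ range k, W i j + H i k := by
    intro i
    induction k with
    | zero => simp
    | succ k ih =>
      rw [sum_range_succ, sum_range_succ, ← add_assoc, ih, add_assoc, hcell, ← add_assoc]
  induction m with
  | zero => simp
  | succ m ih =>
    rw [sum_range_succ, sum_range_succ, add_assoc, hcolumn, ← add_assoc, ih, add_assoc]

/-- For unit steps `x → y` this counts the signed crossings with the ray `{1/2} × [1/2, ∞)`. -/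
def rayCrossing (x y : ℤ × ℤ) : ℤ :=
  if 1 ≤ x.2 ∧ 1 ≤ y.2 then (if 1 ≤ y.1 then 1 else 0) - (if 1 ≤ x.1 then 1 else 0) else 0

lemma rayCrossing_swap (x y : ℤ × ℤ) : rayCrossing y x = -rayCrossing x y := by
  unfold rayCrossing
  split_ifs <;> omega

theorem false_of_unitSteps_grid_map (m : ℕ) (V : ℕ → ℕ → ℤ × ℤ)
    (hh : ∀ i j, V (i + 1) j - V i j ∈ unitSteps) (hv : ∀ i j, V i (j + 1) - V i j ∈ unitSteps)
    (hd : ∀ i j, V (i + 1) (j + 1) - V i j ∈ unitSteps)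
    (hbot : ∀ i, (V i 0).2 ≤ 0) (htop : ∀ i, 1 ≤ (V i m).2)
    (hleft : ∀ j, (V 0 j).1 ≤ 0) (hright : ∀ j, 1 ≤ (V m j).1) : False := by
  have hsum := sum_grid_boundary_eq (fun i j => rayCrossing (V i j) (V (i + 1) j))
    (fun i j => rayCrossing (V i j) (V i (j + 1)))
    (fun i j => add_eq_add_of_sub_mem_unitSteps rayCrossing rayCrossing_swap (hh i j)
      (hv (i + 1) j) (hv i j) (hh i (j + 1)) (hd i j)) m m
  have hbot' : ∀ i, rayCrossing (V i 0) (V (i + 1) 0) = 0 := fun i => by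
    have := hbot i
    rw [rayCrossing, if_neg (by omega)]
  have hleft' : ∀ j, rayCrossing (V 0 j) (V 0 (j + 1)) = 0 := fun j => by
    have := hleft j; have := hleft (j + 1)
    simp only [rayCrossing]; split_ifs <;> omega
  have hright' : ∀ j, rayCrossing (V m j) (V m (j + 1)) = 0 := fun j => by
    have := hright j; have := hright (j + 1)
    simp only [rayCrossing]; split_ifs <;> omega
  have htop' : ∑ i ∈ range m, rayCrossing (V i m) (V (i + 1) m) = 1 := by
    have hφ : ∀ i, rayCrossing (V i m) (V (i + 1) m) =
        (if 1 ≤ (V (i + 1) m).1 then 1 else 0) - (if 1 ≤ (V i m).1 then 1 else 0) := fun i =>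
      if_pos ⟨htop i, htop (i + 1)⟩
    simp only [hφ, sum_range_sub (fun i => if 1 ≤ (V i m).1 then (1 : ℤ) else 0),
      if_pos (hright m), if_neg (not_le.2 ((hleft m).trans_lt one_pos)), sub_zero]
  simp only [hbot', hleft', hright', htop', sum_const_zero] at hsum
  exact absurd hsum (by norm_num)

theorem false_of_unitSteps_map_near_dilation (f : ℤ × ℤ → ℤ × ℤ) {s R : ℝ} (hs : 0 < s)
    (hstep : ∀ c c', dist c c' ≤ 1 → f c' - f c ∈ unitSteps)
    (hnear : ∀ c, |((f c).1 : ℝ) - s * c.1| ≤ R ∧ |((f c).2 : ℝ) - s * c.2| ≤ R) : False := by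
  obtain ⟨M, hM⟩ := exists_nat_ge ((R + 1) / s)
  have hsM : R + 1 ≤ s * M := by rwa [div_le_iff₀ hs, mul_comm] at hM
  have hfar : ∀ x a : ℤ, |(x : ℝ) - s * a| ≤ R → (a ≤ -M → x ≤ 0) ∧ (M ≤ a → 1 ≤ x) := by
    intro x a h
    obtain ⟨h₁, h₂⟩ := abs_le.1 h
    constructor
    · intro ha
      have ha' : (a : ℝ) ≤ -M := by exact_mod_cast ha
      have : (x : ℝ) < 1 := by nlinarith
      exact Int.lt_add_one_iff.1 (by exact_mod_cast this)
    · intro ha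
      have ha' : (M : ℝ) ≤ a := by exact_mod_cast ha
      have : (0 : ℝ) < x := by nlinarith
      exact_mod_cast this
  have hadj : ∀ c c' : ℤ × ℤ, |c.1 - c'.1| ≤ 1 → |c.2 - c'.2| ≤ 1 → dist c c' ≤ 1 := by
    intro c c' h₁ h₂
    rw [Prod.dist_eq, Int.dist_eq, Int.dist_eq]
    exact max_le (by exact_mod_cast h₁) (by exact_mod_cast h₂)
  refine false_of_unitSteps_grid_map (2 * M) (fun i j => f ((i : ℤ) - M, (j : ℤ) - M))
    (fun i j => hstep _ _ (hadj _ _ ?_ ?_)) (fun i j => hstep _ _ (hadj _ _ ?_ ?_))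
    (fun i j => hstep _ _ (hadj _ _ ?_ ?_))
    (fun i => (hfar _ _ (hnear _).2).1 ?_) (fun i => (hfar _ _ (hnear _).2).2 ?_)
    (fun j => (hfar _ _ (hnear _).1).1 ?_) (fun j => (hfar _ _ (hnear _).1).2 ?_)
  all_goals push_cast
  all_goals first
    | omega
    | (rw [abs_le]; constructor <;> omega)

section Lattice

variable {n : ℕ}

@[simp]
lemma intVec_apply (z : Fin n → ℤ) (i : Fin n) : intVec n z i = z i := rfl

lemma intVec_sub (z w : Fin n → ℤ) : intVec n (z - w) = intVec n z - intVec n w := by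
  ext i
  simp

lemma one_le_dist_intVec {z w : Fin n → ℤ} (h : z ≠ w) : 1 ≤ dist (intVec n z) (intVec n w) := by
  obtain ⟨i, hi⟩ := Function.ne_iff.1 h
  calc (1 : ℝ) ≤ |((z i - w i : ℤ) : ℝ)| := by exact_mod_cast Int.one_le_abs (sub_ne_zero.2 hi)
    _ = dist (intVec n z i) (intVec n w i) := by simp [Real.dist_eq]
    _ ≤ dist (intVec n z) (intVec n w) := PiLp.dist_apply_le _ _ i

/-- The lattice points outside `C` form a closed set, being uniformly discrete. -/
theorem IsCompact.exists_pos_forall_intVec_mem {C : Set (EuclideanSpace ℝ (Fin n))}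
    (hC : IsCompact C) : ∃ δ > 0, ∀ z, ∀ c ∈ C, dist (intVec n z) c < δ → intVec n z ∈ C := by
  set S := Set.range (intVec n) \ C
  have hS : IsClosed S := isClosed_of_pairwise_le_dist one_pos <| by
    rintro _ ⟨⟨z, rfl⟩, -⟩ _ ⟨⟨w, rfl⟩, -⟩ hne
    exact one_le_dist_intVec fun h => hne (h ▸ rfl)
  obtain ⟨δ, hδ, hsub⟩ := hC.exists_thickening_subset_open hS.isOpen_compl
    fun x hx hxS => hxS.2 hx
  refine ⟨δ, hδ, fun z c hc hzc => ?_⟩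
  by_contra hz
  exact hsub (mem_thickening_iff.2 ⟨c, hc, hzc⟩) ⟨⟨z, rfl⟩, hz⟩

theorem exists_rounding_sub_mem_sub {K : Set (EuclideanSpace ℝ (Fin n))} (hK : IsCompact K)
    (hcover : ∀ x, ∃ y ∈ K, ∃ z, x = y + intVec n z) :
    ∃ δ > 0, ∃ R : ℝ, ∃ Z : EuclideanSpace ℝ (Fin n) → Fin n → ℤ, (∀ x i, |x i - Z x i| ≤ R) ∧
      ∀ x x', dist x x' < δ → intVec n (Z x - Z x') ∈ K - K := by
  choose Y hYK Z hZ using hcover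
  have hKK : IsCompact (K - K) := by simpa [sub_eq_add_neg] using hK.add hK.neg
  obtain ⟨δ, hδ, hmem⟩ := hKK.exists_pos_forall_intVec_mem
  obtain ⟨R, hR⟩ := hK.isBounded.exists_norm_le
  refine ⟨δ, hδ, R, Z, fun x i => ?_, fun x x' hxx' => ?_⟩
  · have hx : x i - Z x i = Y x i := by
      rw [← intVec_apply, sub_eq_iff_eq_add, ← PiLp.add_apply, ← hZ]
    rw [hx]
    exact (PiLp.norm_apply_le (Y x) i).trans (hR _ (hYK x))
  · refine hmem _ _ (Set.sub_mem_sub (hYK x') (hYK x)) ?_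
    have hdiff : intVec n (Z x - Z x') - (Y x' - Y x) = x - x' := by
      rw [intVec_sub]
      conv_rhs => rw [hZ x, hZ x']
      abel
    rwa [dist_eq_norm, hdiff, ← dist_eq_norm]

end Lattice

def obstructionSet (m : ℕ) : Set (Fin (m + 2) → ℤ) :=
  {z | (z 0, z 1) ∈ unitSteps ∧ ∀ i, |z i| ≤ 1}

lemma obstructionSet_finite (m : ℕ) : (obstructionSet m).Finite :=
  (Set.finite_Icc (-1 : Fin (m + 2) → ℤ) 1).subset fun _ hz =>
    ⟨fun i => (abs_le.1 (hz.2 i)).1, fun i => (abs_le.1 (hz.2 i)).2⟩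

lemma neg_obstructionSet (m : ℕ) : -obstructionSet m = obstructionSet m := by
  ext z
  simp only [Set.mem_neg, obstructionSet, Set.mem_ofPred_eq, Pi.neg_apply, abs_neg, mem_unitSteps]
  exact and_congr_left fun _ => by omega

lemma zero_mem_obstructionSet (m : ℕ) : 0 ∈ obstructionSet m :=
  ⟨by simp [unitSteps], by simp⟩

lemma single_mem_obstructionSet {m : ℕ} (i : Fin (m + 2)) : Pi.single i 1 ∈ obstructionSet m := by
  refine ⟨?_, fun j => ?_⟩
  · rw [mem_unitSteps]
    simp only [Pi.single_apply]
    split_ifs with h₀ h₁ <;> simp_all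
    exact Fin.zero_ne_one (h₀.trans h₁.symm)
  · rw [Pi.single_apply]
    split_ifs <;> simp

lemma closure_obstructionSet (m : ℕ) : AddSubgroup.closure (obstructionSet m) = ⊤ := by
  rw [← Submodule.span_int_eq_addSubgroupClosure, Submodule.toAddSubgroup_eq_top, eq_top_iff,
    ← (Pi.basisFun ℤ (Fin (m + 2))).span_eq]
  refine Submodule.span_mono ?_
  rintro _ ⟨i, rfl⟩
  simpa using single_mem_obstructionSet i

theorem false_of_rounding_mem_obstructionSet {m : ℕ} {δ R : ℝ} (hδ : 0 < δ)
    (Z : EuclideanSpace ℝ (Fin (m + 2)) → Fin (m + 2) → ℤ) (hZR : ∀ x i, |x i - Z x i| ≤ R)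
    (hZA : ∀ x x', dist x x' < δ → Z x - Z x' ∈ obstructionSet m) : False := by
  set s := δ / 3 with hs
  let P : ℤ × ℤ → EuclideanSpace ℝ (Fin (m + 2)) := fun c =>
    PiLp.single 2 0 (s * c.1) + PiLp.single 2 1 (s * c.2)
  have hP₀ (c : ℤ × ℤ) : P c 0 = s * c.1 := by simp [P]
  have hP₁ (c : ℤ × ℤ) : P c 1 = s * c.2 := by simp [P]
  have hscale (a b : ℤ) : dist (s * a) (s * b) = s * dist a b := by
    rw [Real.dist_eq, Int.dist_eq, ← mul_sub, abs_mul, abs_of_pos (by positivity)]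
  have hP (c c' : ℤ × ℤ) (h : dist c c' ≤ 1) : dist (P c') (P c) < δ :=
    calc dist (P c') (P c) ≤ s * dist c'.1 c.1 + s * dist c'.2 c.2 := by
          refine (dist_add_add_le _ _ _ _).trans_eq ?_
          rw [PiLp.dist_single_same, PiLp.dist_single_same, hscale, hscale]
      _ ≤ s * 1 + s * 1 := by
          rw [dist_comm] at h
          gcongr
          exacts [(le_max_left _ _).trans h, (le_max_right _ _).trans h]
      _ < δ := by rw [hs]; linarith
  refine false_of_unitSteps_map_near_dilation (fun c => (Z (P c) 0, Z (P c) 1))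
    (s := s) (R := R) (by positivity) (fun c c' h => (hZA _ _ (hP c c' h)).1) fun c => ⟨?_, ?_⟩
  · rw [← hP₀, abs_sub_comm]
    exact hZR _ _
  · rw [← hP₁, abs_sub_comm]
    exact hZR _ _

theorem higher_dimensional_obstruction (n : ℕ) (hn : 2 ≤ n) :
    ∃ A : Set (Fin n → ℤ), A.Finite ∧ -A = A ∧ 0 ∈ A ∧
      AddSubgroup.closure A = ⊤ ∧
      ∀ K : Set (EuclideanSpace ℝ (Fin n)), IsCompact K →
        (∀ x : EuclideanSpace ℝ (Fin n), ∃ y ∈ K, ∃ z : Fin n → ℤ,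
          x = y + intVec n z) →
        ¬ (∀ z : Fin n → ℤ, z ∈ A ↔ intVec n z ∈ K - K) := by
  obtain ⟨m, rfl⟩ : ∃ m, n = m + 2 := ⟨n - 2, by omega⟩
  refine ⟨obstructionSet m, obstructionSet_finite m, neg_obstructionSet m,
    zero_mem_obstructionSet m, closure_obstructionSet m, fun K hK hcover hA => ?_⟩
  obtain ⟨δ, hδ, R, Z, hZR, hZK⟩ := exists_rounding_sub_mem_sub hK hcover
  exact false_of_rounding_mem_obstructionSet hδ Z hZR fun x x' h => (hA _).2 (hZK x x' h)
end
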